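/- arXiv:2508.12934 — 4 statements merged into one kernel-verified Lean document; each statement's English description precedes it below -/
import Mathlib

section
/- A contest success function on N satisfies strict monotonicity (SM), Luce's choice axiom (LCA), homogeneous relative externality (HRE), and anonymity (ANY) if and only if there exist parameters b ≥ 0 and r > 0 such that for every subset M ⊆ N with |M| ≥ 2, every i ∈ M, and every effort vector x^M ∈ ℝ_+^M \ {0}: p_i^M(x^M) = (b + x_i^r) / Σ_{j∈M} (b + x_j^r). -/
open Finset

/-- A joint effort vector: componentwise nonnegative, and active on `M`. -/
def FeasibleOn {N : Type*} (M : Finset N) (x : N → ℝ) : Prop :=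
  (∀ i, 0 ≤ x i) ∧ ∃ i ∈ M, x i ≠ 0

/-- A feasible effort vector for the full contest: `x ∈ ℝ₊^N \ {0}`. -/
def Feasible {N : Type*} (x : N → ℝ) : Prop :=
  (∀ i, 0 ≤ x i) ∧ ∃ i, x i ≠ 0

/-- A contest success function (CSF) on contestant set `N`: for every `M ⊆ N` with
`|M| ≥ 2`, a family of functions `p M · i` for `i ∈ M`, valued in `[0,1]`, depending
only on the coordinates in `M`, and summing to one over `M`. -/
structure CSF (N : Type*) where
  p : Finset N → (N → ℝ) → N → ℝ
  restrict : ∀ M : Finset N, 2 ≤ M.card → ∀ x y : N → ℝ, FeasibleOn M x →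
    (∀ i ∈ M, x i = y i) → ∀ i ∈ M, p M x i = p M y i
  nonneg : ∀ M : Finset N, 2 ≤ M.card → ∀ x, FeasibleOn M x → ∀ i ∈ M, 0 ≤ p M x i
  le_one : ∀ M : Finset N, 2 ≤ M.card → ∀ x, FeasibleOn M x → ∀ i ∈ M, p M x i ≤ 1
  sum_eq_one : ∀ M : Finset N, 2 ≤ M.card → ∀ x, FeasibleOn M x → ∑ i ∈ M, p M x i = 1

namespace CSF

variable {N : Type*} [Fintype N] [DecidableEq N]

/-- Winning probability in the full contest. -/
def P (c : CSF N) (x : N → ℝ) (i : N) : ℝ := c.p Finset.univ x i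

/-- Strict monotonicity (SM). -/
def SM (c : CSF N) : Prop :=
  ∀ x, Feasible x → ∀ i : N, c.P x i < 1 → ∀ xi' : ℝ, x i < xi' →
    c.P x i < c.P (Function.update x i xi') i

/-- Luce's choice axiom (LCA). -/
def LCA (c : CSF N) : Prop :=
  ∀ x, Feasible x → ∀ M : Finset N, 2 ≤ M.card → (∃ i ∈ M, x i ≠ 0) →
    ∀ i ∈ M, c.P x i = c.p M x i * ∑ j ∈ M, c.P x j

/-- Deviation `d_{ij}(x)`: the externality of `i`'s activity on `j`'s allocation. -/
noncomputable def dev (c : CSF N) (x : N → ℝ) (i j : N) : ℝ :=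
  (c.P (Function.update x i 0) j - c.P x j) / c.P (Function.update x i 0) j

/-- Homogeneous relative externality (HRE). -/
def HRE (c : CSF N) : Prop :=
  ∀ x, Feasible x → ∀ i j : N, i ≠ j → 0 < x i → 0 < x j → ∀ l : ℝ, 0 < l →
    0 < c.P (Function.update x i 0) j → 0 < c.P (Function.update x j 0) i →
    0 < c.P (Function.update (fun k => l * x k) i 0) j →
    0 < c.P (Function.update (fun k => l * x k) j 0) i →
    c.dev x j i ≠ 0 → c.dev (fun k => l * x k) j i ≠ 0 →
    c.dev x i j / c.dev x j i
      = c.dev (fun k => l * x k) i j / c.dev (fun k => l * x k) j i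

/-- Relative homogeneity (RH). -/
def RH (c : CSF N) : Prop :=
  ∀ x, Feasible x → ∀ i j : N, 0 < x i → 0 < x j → ∀ l : ℝ, 0 < l →
    c.P x i / c.P x j = c.P (fun k => l * x k) i / c.P (fun k => l * x k) j

/-- Homogeneity (HOM). -/
def HOM (c : CSF N) : Prop :=
  ∀ x, Feasible x → ∀ i : N, ∀ l : ℝ, 0 < l → c.P (fun k => l * x k) i = c.P x i

/-- Anonymity (ANY). -/
def ANY (c : CSF N) : Prop :=
  ∀ π : Equiv.Perm N, ∀ x, Feasible x → ∀ i : N,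
    c.P (fun k => x (π.symm k)) (π i) = c.P x i

/-- No advantageous reallocation (NAR). -/
def NAR (c : CSF N) : Prop :=
  ∀ x, Feasible x → ∀ i j : N, i ≠ j → ∀ xi' xj' : ℝ, 0 ≤ xi' → 0 ≤ xj' →
    xi' + xj' = x i + x j → ∀ k : N, k ≠ i → k ≠ j →
    c.P (Function.update (Function.update x i xi') j xj') k = c.P x k

/-- Dummy consistency (DC). -/
def DC (c : CSF N) : Prop :=
  ∀ x, Feasible x → ∀ i : N, x i = 0 → ∀ j : N, j ≠ i →
    c.P x j = c.p (Finset.univ.erase i) x j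

/-- Clark–Riis independence (CRI). -/
def CRI (c : CSF N) : Prop :=
  ∀ x, Feasible x → ∀ i j : N, i ≠ j → c.P x j < 1 →
    c.P (Function.update x j 0) i = c.P x i / (1 - c.P x j)

/-- Split-proofness (SP). -/
def SP (c : CSF N) : Prop :=
  ∀ x, Feasible x → ∀ i j : N, i ≠ j →
    c.P x i + c.P x j ≤ c.p (Finset.univ.erase j) (Function.update x i (x i + x j)) i

/-- Collusion-proofness (CP). -/
def CP (c : CSF N) : Prop :=
  ∀ x, Feasible x → ∀ i j : N, i ≠ j →
    c.p (Finset.univ.erase j) (Function.update x i (x i + x j)) i ≤ c.P x i + c.P x j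

end CSF

namespace CSFproof

set_option linter.unusedSectionVars false

open Finset CSF

variable {N : Type*} [Fintype N] [DecidableEq N]

lemma feasibleOn_univ {x : N → ℝ} (hx : Feasible x) : FeasibleOn Finset.univ x := by
  obtain ⟨h1, i, hi⟩ := hx
  exact ⟨h1, i, Finset.mem_univ i, hi⟩

lemma two_le_card (hN : 3 ≤ Fintype.card N) : 2 ≤ (Finset.univ : Finset N).card := by
  rw [Finset.card_univ]; omega

lemma exists_third (hN : 3 ≤ Fintype.card N) (i j : N) : ∃ l : N, l ≠ i ∧ l ≠ j := by
  have h2 : ({i, j} : Finset N).card ≤ 2 := Finset.card_insert_le _ _ |>.trans (by simp)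
  have : (Finset.univ \ {i, j} : Finset N).Nonempty := by
    rw [← Finset.card_pos, Finset.card_sdiff_of_subset (Finset.subset_univ _), Finset.card_univ]
    omega
  obtain ⟨l, hl⟩ := this
  simp only [Finset.mem_sdiff, Finset.mem_insert, Finset.mem_singleton, not_or] at hl
  exact ⟨l, hl.2.1, hl.2.2⟩

variable (c : CSF N)

lemma sumP (hN : 3 ≤ Fintype.card N) {x : N → ℝ} (hx : Feasible x) :
    ∑ i, c.P x i = 1 :=
  c.sum_eq_one _ (two_le_card hN) x (feasibleOn_univ hx)

lemma P_nonneg (hN : 3 ≤ Fintype.card N) {x : N → ℝ} (hx : Feasible x) (i : N) :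
    0 ≤ c.P x i :=
  c.nonneg _ (two_le_card hN) x (feasibleOn_univ hx) i (Finset.mem_univ i)

lemma P_le_one (hN : 3 ≤ Fintype.card N) {x : N → ℝ} (hx : Feasible x) (i : N) :
    c.P x i ≤ 1 :=
  c.le_one _ (two_le_card hN) x (feasibleOn_univ hx) i (Finset.mem_univ i)

lemma P_eq_zero_of (hN : 3 ≤ Fintype.card N) {x : N → ℝ} (hx : Feasible x) {i j : N}
    (hij : j ≠ i) (h1 : c.P x i = 1) : c.P x j = 0 := by
  have hsum := sumP c hN hx
  have hrest : ∑ k ∈ Finset.univ.erase i, c.P x k = 0 := by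
    have := Finset.add_sum_erase Finset.univ (c.P x) (Finset.mem_univ i)
    rw [← this, h1] at hsum; linarith
  have := Finset.sum_eq_zero_iff_of_nonneg (fun k _ => P_nonneg c hN hx k) |>.mp hrest
  exact this j (Finset.mem_erase.mpr ⟨hij, Finset.mem_univ j⟩)

/-- Key SM consequence: if `P x j = 0` then lowering `j`'s effort forces probability 1. -/
lemma ones (hSM : c.SM) (hN : 3 ≤ Fintype.card N) {x : N → ℝ} (hx : Feasible x) {j : N}
    (h0 : c.P x j = 0) {t : ℝ} (ht : t < x j)
    (hyf : Feasible (Function.update x j t)) :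
    c.P (Function.update x j t) j = 1 := by
  set y := Function.update x j t with hy
  have hyj : y j = t := Function.update_self j t x
  by_contra hne
  have hlt : c.P y j < 1 := lt_of_le_of_ne (P_le_one c hN hyf j) hne
  have := hSM y hyf j hlt (x j) (by rw [hyj]; exact ht)
  have hxx : Function.update y j (x j) = x := by
    rw [hy, Function.update_idem, Function.update_eq_self]
  rw [hxx, h0] at this
  exact absurd this (not_lt.mpr (P_nonneg c hN hyf j))

/-- No pathology when a second contestant is active. -/
lemma pos_of_companion (hSM : c.SM) (hN : 3 ≤ Fintype.card N) {x : N → ℝ} (hx : Feasible x)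
    {j k : N} (hkj : k ≠ j) (hj : 0 < x j) (hk : 0 < x k) : 0 < c.P x j := by
  rcases lt_or_ge 0 (c.P x j) with h | h
  · exact h
  exfalso
  have h0 : c.P x j = 0 := le_antisymm h (P_nonneg c hN hx j)
  set t := x j / 2 with hts
  set t' := (3 / 4 : ℝ) * x j with ht's
  have h0t : 0 < t := by positivity
  have htt' : t < t' := by rw [hts, ht's]; linarith
  have ht'x : t' < x j := by rw [ht's]; linarith
  set y := Function.update x j t with hy
  set y' := Function.update x j t' with hy'
  have hyk : y k = x k := Function.update_of_ne hkj _ _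
  have hy'k : y' k = x k := Function.update_of_ne hkj _ _
  have hyf : Feasible y := ⟨fun i => by
    rcases eq_or_ne i j with rfl | h'
    · rw [hy, Function.update_self]; linarith
    · rw [hy, Function.update_of_ne h']; exact hx.1 i, ⟨k, by rw [hyk]; exact ne_of_gt hk⟩⟩
  have hy'f : Feasible y' := ⟨fun i => by
    rcases eq_or_ne i j with rfl | h'
    · rw [hy', Function.update_self]; linarith
    · rw [hy', Function.update_of_ne h']; exact hx.1 i, ⟨k, by rw [hy'k]; exact ne_of_gt hk⟩⟩
  have hy1 : c.P y j = 1 := ones c hSM hN hx h0 (lt_trans htt' ht'x) hyf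
  have hy'1 : c.P y' j = 1 := ones c hSM hN hx h0 ht'x hy'f
  have hyk0 : c.P y k = 0 := P_eq_zero_of c hN hyf hkj hy1
  have hy'k0 : c.P y' k = 0 := P_eq_zero_of c hN hy'f hkj hy'1
  -- lower k's effort to 0 in both
  set u := Function.update y k 0 with hu
  set u' := Function.update y' k 0 with hu'
  have huj : u j = t := by rw [hu, Function.update_of_ne hkj.symm, hy, Function.update_self]
  have hu'j : u' j = t' := by rw [hu', Function.update_of_ne hkj.symm, hy', Function.update_self]
  have huf : Feasible u := ⟨fun i => by
    rcases eq_or_ne i k with rfl | h'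
    · rw [hu, Function.update_self]
    · rw [hu, Function.update_of_ne h']; exact hyf.1 i, ⟨j, by rw [huj]; exact ne_of_gt h0t⟩⟩
  have hu'f : Feasible u' := ⟨fun i => by
    rcases eq_or_ne i k with rfl | h'
    · rw [hu', Function.update_self]
    · rw [hu', Function.update_of_ne h']; exact hy'f.1 i,
      ⟨j, by rw [hu'j]; exact ne_of_gt (lt_trans h0t htt')⟩⟩
  have hu1 : c.P u k = 1 := ones c hSM hN hyf hyk0 (by rw [hyk]; exact hk) huf
  have hu'1 : c.P u' k = 1 := ones c hSM hN hy'f hy'k0 (by rw [hy'k]; exact hk) hu'f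
  have huj0 : c.P u j = 0 := P_eq_zero_of c hN huf hkj.symm hu1
  have hu'j0 : c.P u' j = 0 := P_eq_zero_of c hN hu'f hkj.symm hu'1
  -- SM from u to u'
  have hup : Function.update u j t' = u' := by
    funext m
    rcases eq_or_ne m j with rfl | hmj
    · rw [Function.update_self, hu'j]
    · rw [Function.update_of_ne hmj]
      rcases eq_or_ne m k with rfl | hmk
      · rw [hu, Function.update_self, hu', Function.update_self]
      · rw [hu, Function.update_of_ne hmk, hy, Function.update_of_ne hmj,
          hu', Function.update_of_ne hmk, hy', Function.update_of_ne hmj]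
  have := hSM u huf j (by rw [huj0]; norm_num) t' (by rw [huj]; exact htt')
  rw [hup, huj0, hu'j0] at this
  exact absurd this (lt_irrefl 0)

end CSFproof
namespace CSFproof

open Finset CSF

set_option linter.unusedSectionVars false

variable {N : Type*} [Fintype N] [DecidableEq N] (c : CSF N)

lemma pairLCA (hLCA : c.LCA) {x : N → ℝ} (hx : Feasible x) {i j : N} (hij : i ≠ j)
    (h0 : x i ≠ 0 ∨ x j ≠ 0) :
    c.P x i = c.p {i, j} x i * (c.P x i + c.P x j) := by
  have hc : ({i, j} : Finset N).card = 2 := Finset.card_pair hij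
  have hex : ∃ k ∈ ({i, j} : Finset N), x k ≠ 0 := by
    rcases h0 with h | h
    · exact ⟨i, by simp, h⟩
    · exact ⟨j, by simp, h⟩
  have := hLCA x hx {i, j} (le_of_eq hc.symm) hex i (by simp)
  rwa [Finset.sum_pair hij] at this

/-- Full positivity: active contestants win with positive probability. -/
lemma P_pos (hSM : c.SM) (hLCA : c.LCA) (hN : 3 ≤ Fintype.card N)
    {x : N → ℝ} (hx : Feasible x) {j : N} (hj : 0 < x j) : 0 < c.P x j := by
  by_cases hcomp : ∃ k, k ≠ j ∧ 0 < x k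
  · obtain ⟨k, hkj, hk⟩ := hcomp
    exact pos_of_companion c hSM hN hx hkj hj hk
  push_neg at hcomp
  have hzero : ∀ k, k ≠ j → x k = 0 := fun k hk =>
    le_antisymm (hcomp k hk) (hx.1 k)
  rcases lt_or_ge 0 (c.P x j) with h | h
  · exact h
  exfalso
  have h0 : c.P x j = 0 := le_antisymm h (P_nonneg c hN hx j)
  -- some other player has positive probability
  have hex : ∃ k, k ≠ j ∧ 0 < c.P x k := by
    by_contra hcon
    push_neg at hcon
    have : ∀ k ∈ Finset.univ, c.P x k = 0 := fun k _ => by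
      rcases eq_or_ne k j with rfl | hk
      · exact h0
      · exact le_antisymm (hcon k hk) (P_nonneg c hN hx k)
    have := Finset.sum_eq_zero this
    rw [sumP c hN hx] at this; norm_num at this
  obtain ⟨k, hkj, hPk⟩ := hex
  obtain ⟨l, hlj, hlk⟩ := exists_third hN j k
  -- p on the pair {j,k} vanishes for j
  have hpair := pairLCA c hLCA hx (hkj.symm : j ≠ k) (Or.inl (ne_of_gt hj))
  rw [h0, zero_add] at hpair
  have hpjk : c.p {j, k} x j = 0 := by
    rcases mul_eq_zero.mp hpair.symm with h' | h'
    · exact h'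
    · exact absurd h' (ne_of_gt hPk)
  -- activate l
  set u := Function.update x l (x j) with hu
  have huj : u j = x j := Function.update_of_ne hlj.symm _ _
  have huk : u k = x k := Function.update_of_ne hlk.symm _ _
  have hul : u l = x j := Function.update_self _ _ _
  have huf : Feasible u := ⟨fun i => by
    rcases eq_or_ne i l with rfl | h'
    · rw [hul]; exact le_of_lt hj
    · rw [hu, Function.update_of_ne h']; exact hx.1 i, ⟨l, by rw [hul]; exact ne_of_gt hj⟩⟩
  have hfeasOn : FeasibleOn ({j, k} : Finset N) u :=
    ⟨huf.1, ⟨j, by simp, by rw [huj]; exact ne_of_gt hj⟩⟩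
  have hrestr : c.p {j, k} u j = c.p {j, k} x j := by
    refine c.restrict _ (le_of_eq (Finset.card_pair (hkj.symm : j ≠ k)).symm) u x hfeasOn
      (fun i hi => ?_) j (by simp)
    rcases Finset.mem_insert.mp hi with rfl | hi
    · exact huj
    · rw [Finset.mem_singleton.mp hi]; exact huk
  have hpairu := pairLCA c hLCA huf (hkj.symm : j ≠ k) (Or.inl (by rw [huj]; exact ne_of_gt hj))
  rw [hrestr, hpjk, zero_mul] at hpairu
  -- now u has companion l active, contradiction with pos_of_companion
  have := pos_of_companion c hSM hN huf (hlj : l ≠ j) (by rw [huj]; exact hj)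
    (by rw [hul]; exact hj)
  rw [hpairu] at this
  exact lt_irrefl 0 this

lemma exists_perm_pair {i j k l : N} (hij : i ≠ j) (hkl : k ≠ l) :
    ∃ π : Equiv.Perm N, π i = k ∧ π j = l := by
  set σ := Equiv.swap i k with hσ
  have hσi : σ i = k := Equiv.swap_apply_left i k
  have hkσj : σ j ≠ k := by
    rcases eq_or_ne j k with rfl | hjk
    · rw [hσ, Equiv.swap_apply_right]; exact fun h => hij h
    · rw [hσ, Equiv.swap_apply_of_ne_of_ne hij.symm hjk]; exact hjk
  refine ⟨σ.trans (Equiv.swap (σ j) l), ?_, ?_⟩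
  · simp only [Equiv.trans_apply, hσi]
    exact Equiv.swap_apply_of_ne_of_ne (Ne.symm hkσj) hkl
  · simp only [Equiv.trans_apply]
    exact Equiv.swap_apply_left (σ j) l

end CSFproof
namespace CSFproof

open Finset CSF

set_option linter.unusedSectionVars false
set_option linter.unusedVariables false

variable {N : Type*} [Fintype N] [DecidableEq N]

/-- Canonical vector supported on two coordinates. -/
def Evec (i j : N) (s t : ℝ) : N → ℝ := fun m => if m = i then s else if m = j then t else 0

lemma Evec_apply_i (i j : N) (s t : ℝ) : Evec i j s t i = s := if_pos rfl

lemma Evec_apply_j {i j : N} (hji : j ≠ i) (s t : ℝ) : Evec i j s t j = by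
    exact t := by simp [Evec, hji]

lemma Evec_apply_j' {i j : N} (hji : j ≠ i) (s t : ℝ) : Evec i j s t j = t := by
  simp [Evec, hji]

lemma Evec_apply_other {i j m : N} (hmi : m ≠ i) (hmj : m ≠ j) (s t : ℝ) :
    Evec i j s t m = 0 := by simp [Evec, hmi, hmj]

lemma Evec_nonneg {i j : N} {s t : ℝ} (hs : 0 ≤ s) (ht : 0 ≤ t) (m : N) :
    0 ≤ Evec i j s t m := by
  unfold Evec; split_ifs <;> simp [hs, ht]

lemma Evec_feasible {i j : N} (hji : j ≠ i) {s t : ℝ} (hs : 0 ≤ s) (ht : 0 < t) :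
    Feasible (Evec i j s t) :=
  ⟨Evec_nonneg hs (le_of_lt ht), ⟨j, by rw [Evec_apply_j' hji]; exact ne_of_gt ht⟩⟩

variable (c : CSF N)

/-- The pair shares depend only on the pair of effort values (via ANY + restrict). -/
lemma pair_p_eq (hSM : c.SM) (hLCA : c.LCA) (hANY : c.ANY) (hN : 3 ≤ Fintype.card N)
    {x y : N → ℝ} (hx : Feasible x) (hy : Feasible y) {i j k l : N}
    (hij : i ≠ j) (hkl : k ≠ l) (hxi : x i = y k) (hxj : x j = y l) (hj : 0 < x j) :
    c.p {i, j} x i = c.p {k, l} y k := by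
  set z := Evec i j (x i) (x j) with hz
  set w := Evec k l (x i) (x j) with hw
  have hzi : z i = x i := Evec_apply_i _ _ _ _
  have hzj : z j = x j := Evec_apply_j' hij.symm _ _
  have hwk : w k = x i := Evec_apply_i _ _ _ _
  have hwl : w l = x j := Evec_apply_j' hkl.symm _ _
  have hzf : Feasible z := Evec_feasible hij.symm (hx.1 i) hj
  have hwf : Feasible w := Evec_feasible hkl.symm (hx.1 i) hj
  -- restrict x to z
  have hx_on : FeasibleOn ({i, j} : Finset N) x := ⟨hx.1, ⟨j, by simp, ne_of_gt hj⟩⟩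
  have hrz : c.p {i, j} x i = c.p {i, j} z i := by
    refine c.restrict _ (le_of_eq (Finset.card_pair hij).symm) x z hx_on (fun m hm => ?_) i
      (by simp)
    rcases Finset.mem_insert.mp hm with rfl | hm
    · exact hzi.symm
    · rw [Finset.mem_singleton.mp hm]; exact hzj.symm
  have hy_on : FeasibleOn ({k, l} : Finset N) y := ⟨hy.1, ⟨l, by simp, by rw [← hxj]; exact ne_of_gt hj⟩⟩
  have hrw : c.p {k, l} y k = c.p {k, l} w k := by
    refine c.restrict _ (le_of_eq (Finset.card_pair hkl).symm) y w hy_on (fun m hm => ?_) k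
      (by simp)
    rcases Finset.mem_insert.mp hm with rfl | hm
    · rw [hwk, hxi]
    · rw [Finset.mem_singleton.mp hm, hwl, hxj]
  -- permutation transfer
  obtain ⟨π, hπi, hπj⟩ := exists_perm_pair hij hkl
  have hperm : (fun m => z (π.symm m)) = w := by
    funext m
    rcases eq_or_ne m k with rfl | hmk
    · have : π.symm m = i := by rw [← hπi, Equiv.symm_apply_apply]
      rw [this, hzi, hwk]
    · rcases eq_or_ne m l with rfl | hml
      · have : π.symm m = j := by rw [← hπj, Equiv.symm_apply_apply]
        rw [this, hzj, hwl]
      · have h1 : π.symm m ≠ i := fun h => hmk (by rw [← hπi, ← h, Equiv.apply_symm_apply])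
        have h2 : π.symm m ≠ j := fun h => hml (by rw [← hπj, ← h, Equiv.apply_symm_apply])
        rw [hz, Evec_apply_other h1 h2, hw, Evec_apply_other hmk hml]
  have hPk : c.P w k = c.P z i := by
    have := hANY π z hzf i
    rwa [hperm, hπi] at this
  have hPl : c.P w l = c.P z j := by
    have := hANY π z hzf j
    rwa [hperm, hπj] at this
  -- compute both p's from P
  have hPzj : 0 < c.P z j := P_pos c hSM hLCA hN hzf (by rw [hzj]; exact hj)
  have hPzi : 0 ≤ c.P z i := P_nonneg c hN hzf i
  have hS : c.P z i + c.P z j ≠ 0 := by positivity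
  have h1 := pairLCA c hLCA hzf hij (Or.inr (by rw [hzj]; exact ne_of_gt hj))
  have h2 := pairLCA c hLCA hwf hkl (Or.inr (by rw [hwl]; exact ne_of_gt hj))
  rw [hPk, hPl] at h2
  rw [hrz, hrw]
  have e1 : c.p {i, j} z i = c.P z i / (c.P z i + c.P z j) := by
    rw [eq_div_iff hS]; linarith [h1]
  have e2 : c.p {k, l} w k = c.P z i / (c.P z i + c.P z j) := by
    rw [eq_div_iff hS]; linarith [h2]
  rw [e1, e2]

/-- Ratio invariance: the ratio of winning probabilities depends only on the pair of values. -/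
lemma ratio_eq (hSM : c.SM) (hLCA : c.LCA) (hANY : c.ANY) (hN : 3 ≤ Fintype.card N)
    {x y : N → ℝ} (hx : Feasible x) (hy : Feasible y) {i j k l : N}
    (hij : i ≠ j) (hkl : k ≠ l) (hxi : x i = y k) (hxj : x j = y l) (hj : 0 < x j) :
    c.P x i * c.P y l = c.P y k * c.P x j := by
  have hq := pair_p_eq c hSM hLCA hANY hN hx hy hij hkl hxi hxj hj
  set q := c.p {i, j} x i with hqd
  have h1 := pairLCA c hLCA hx hij (Or.inr (ne_of_gt hj))
  have h2 := pairLCA c hLCA hy hkl (Or.inr (by rw [← hxj]; exact ne_of_gt hj))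
  rw [← hq] at h2
  rw [← hqd] at h1
  have hPxj : 0 < c.P x j := P_pos c hSM hLCA hN hx hj
  have hq1 : q ≠ 1 := by
    intro hq1
    rw [hq1, one_mul] at h1
    linarith
  have hr1 : c.P x i * (1 - q) = q * c.P x j := by linarith [h1]
  have hr2 : c.P y k * (1 - q) = q * c.P y l := by linarith [h2]
  have h1q : (1 : ℝ) - q ≠ 0 := fun h => hq1 (by linarith)
  apply mul_right_cancel₀ h1q
  calc c.P x i * c.P y l * (1 - q) = (c.P x i * (1 - q)) * c.P y l := by ring
    _ = (q * c.P x j) * c.P y l := by rw [hr1]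
    _ = (q * c.P y l) * c.P x j := by ring
    _ = (c.P y k * (1 - q)) * c.P x j := by rw [← hr2]
    _ = c.P y k * c.P x j * (1 - q) := by ring

end CSFproof
namespace CSFproof

open Finset CSF

set_option linter.unusedSectionVars false
set_option linter.unusedVariables false

variable {N : Type*} [Fintype N] [DecidableEq N]

/-- The impact function, read off from the canonical two-contestant comparison. -/
noncomputable def fv (c : CSF N) (j₀ k₀ : N) (t : ℝ) : ℝ :=
  c.P (Evec j₀ k₀ t 1) j₀ / c.P (Evec j₀ k₀ t 1) k₀

variable (c : CSF N)

lemma fv_den_pos (hSM : c.SM) (hLCA : c.LCA) (hN : 3 ≤ Fintype.card N)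
    {j₀ k₀ : N} (hjk : j₀ ≠ k₀) {t : ℝ} (ht : 0 ≤ t) :
    0 < c.P (Evec j₀ k₀ t 1) k₀ :=
  P_pos c hSM hLCA hN (Evec_feasible hjk.symm ht one_pos)
    (by rw [Evec_apply_j' hjk.symm]; exact one_pos)

lemma fv_nonneg (hSM : c.SM) (hLCA : c.LCA) (hN : 3 ≤ Fintype.card N)
    {j₀ k₀ : N} (hjk : j₀ ≠ k₀) {t : ℝ} (ht : 0 ≤ t) : 0 ≤ fv c j₀ k₀ t :=
  div_nonneg (P_nonneg c hN (Evec_feasible hjk.symm ht one_pos) j₀)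
    (le_of_lt (fv_den_pos c hSM hLCA hN hjk ht))

lemma fv_pos (hSM : c.SM) (hLCA : c.LCA) (hN : 3 ≤ Fintype.card N)
    {j₀ k₀ : N} (hjk : j₀ ≠ k₀) {t : ℝ} (ht : 0 < t) : 0 < fv c j₀ k₀ t :=
  div_pos (P_pos c hSM hLCA hN (Evec_feasible hjk.symm (le_of_lt ht) one_pos)
      (by rw [Evec_apply_i]; exact ht))
    (fv_den_pos c hSM hLCA hN hjk (le_of_lt ht))

lemma fv_one (hSM : c.SM) (hLCA : c.LCA) (hANY : c.ANY) (hN : 3 ≤ Fintype.card N)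
    {j₀ k₀ : N} (hjk : j₀ ≠ k₀) : fv c j₀ k₀ 1 = 1 := by
  set E := Evec j₀ k₀ (1 : ℝ) 1 with hE
  have hEf : Feasible E := Evec_feasible hjk.symm zero_le_one one_pos
  have hperm : (fun m => E ((Equiv.swap j₀ k₀).symm m)) = E := by
    funext m
    rw [Equiv.symm_swap]
    rcases eq_or_ne m j₀ with rfl | h1
    · rw [Equiv.swap_apply_left, hE, Evec_apply_j' hjk.symm, Evec_apply_i]
    · rcases eq_or_ne m k₀ with rfl | h2
      · rw [Equiv.swap_apply_right, hE, Evec_apply_j' hjk.symm, Evec_apply_i]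
      · rw [Equiv.swap_apply_of_ne_of_ne h1 h2]
  have heq := hANY (Equiv.swap j₀ k₀) E hEf j₀
  rw [hperm, Equiv.swap_apply_left] at heq
  unfold fv
  rw [← hE, ← heq, div_self (ne_of_gt (fv_den_pos c hSM hLCA hN hjk zero_le_one))]

/-- The three-coordinate comparison vector. -/
def Tvec (j₀ k₀ l₀ : N) (a b : ℝ) : N → ℝ :=
  fun m => if m = j₀ then a else if m = k₀ then b else if m = l₀ then 1 else 0

section Tvec

variable {j₀ k₀ l₀ : N} {a b : ℝ}

lemma Tvec_j : Tvec j₀ k₀ l₀ a b j₀ = a := if_pos rfl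

lemma Tvec_k (hkj : k₀ ≠ j₀) : Tvec j₀ k₀ l₀ a b k₀ = b := by simp [Tvec, hkj]

lemma Tvec_l (hlj : l₀ ≠ j₀) (hlk : l₀ ≠ k₀) : Tvec j₀ k₀ l₀ a b l₀ = 1 := by
  simp [Tvec, hlj, hlk]

lemma Tvec_feasible (hlj : l₀ ≠ j₀) (hlk : l₀ ≠ k₀) (ha : 0 ≤ a) (hb : 0 ≤ b) :
    Feasible (Tvec j₀ k₀ l₀ a b) := by
  constructor
  · intro m; unfold Tvec; split_ifs <;> norm_num [ha, hb]
  · exact ⟨l₀, by rw [Tvec_l hlj hlk]; norm_num⟩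

end Tvec

/-- The Luce representation: `P x i = f (x i) / ∑ f (x j)`. -/
lemma rep (hSM : c.SM) (hLCA : c.LCA) (hANY : c.ANY) (hN : 3 ≤ Fintype.card N)
    {j₀ k₀ : N} (hjk : j₀ ≠ k₀) {x : N → ℝ} (hx : Feasible x) (i : N) :
    c.P x i = fv c j₀ k₀ (x i) / ∑ j, fv c j₀ k₀ (x j) := by
  obtain ⟨m, hm⟩ := hx.2
  have hxm : 0 < x m := lt_of_le_of_ne (hx.1 m) (Ne.symm hm)
  have hfm : 0 < fv c j₀ k₀ (x m) := fv_pos c hSM hLCA hN hjk hxm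
  obtain ⟨l₀, hlj, hlk⟩ := exists_third hN j₀ k₀
  -- Claim: ∀ i, P x i * fv (x m) = fv (x i) * P x m
  have key : ∀ i, c.P x i * fv c j₀ k₀ (x m) = fv c j₀ k₀ (x i) * c.P x m := by
    intro i
    rcases eq_or_ne i m with rfl | him
    · ring
    set T := Tvec j₀ k₀ l₀ (x i) (x m) with hT
    have hTj : T j₀ = x i := Tvec_j
    have hTk : T k₀ = x m := Tvec_k (Ne.symm hjk)
    have hTl : T l₀ = 1 := Tvec_l hlj hlk
    have hTf : Feasible T := Tvec_feasible hlj hlk (hx.1 i) (hx.1 m)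
    set Ei := Evec j₀ k₀ (x i) (1 : ℝ) with hEi
    set Em := Evec j₀ k₀ (x m) (1 : ℝ) with hEm
    have hEif : Feasible Ei := Evec_feasible hjk.symm (hx.1 i) one_pos
    have hEmf : Feasible Em := Evec_feasible hjk.symm (hx.1 m) one_pos
    -- (1)
    have hA : c.P x i * c.P T k₀ = c.P T j₀ * c.P x m :=
      ratio_eq c hSM hLCA hANY hN hx hTf him hjk hTj.symm hTk.symm hxm
    -- (2)
    have hB : c.P T j₀ * c.P Ei k₀ = c.P Ei j₀ * c.P T l₀ := by
      refine ratio_eq c hSM hLCA hANY hN hTf hEif (Ne.symm hlj) hjk ?_ ?_ ?_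
      · rw [hTj, hEi, Evec_apply_i]
      · rw [hTl, hEi, Evec_apply_j' hjk.symm]
      · rw [hTl]; exact one_pos
    -- (3)
    have hC : c.P T k₀ * c.P Em k₀ = c.P Em j₀ * c.P T l₀ := by
      refine ratio_eq c hSM hLCA hANY hN hTf hEmf (Ne.symm hlk) hjk ?_ ?_ ?_
      · rw [hTk, hEm, Evec_apply_i]
      · rw [hTl, hEm, Evec_apply_j' hjk.symm]
      · rw [hTl]; exact one_pos
    have hPTl : 0 < c.P T l₀ := P_pos c hSM hLCA hN hTf (by rw [hTl]; exact one_pos)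
    have hdeni : 0 < c.P Ei k₀ := fv_den_pos c hSM hLCA hN hjk (hx.1 i)
    have hdenm : 0 < c.P Em k₀ := fv_den_pos c hSM hLCA hN hjk (hx.1 m)
    -- core cross identity
    have hGm : c.P x i * c.P Em j₀ * c.P Ei k₀ = c.P Ei j₀ * c.P x m * c.P Em k₀ := by
      apply mul_right_cancel₀ (ne_of_gt hPTl)
      calc c.P x i * c.P Em j₀ * c.P Ei k₀ * c.P T l₀
          = c.P x i * (c.P Em j₀ * c.P T l₀) * c.P Ei k₀ := by ring
        _ = c.P x i * (c.P T k₀ * c.P Em k₀) * c.P Ei k₀ := by rw [hC]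
        _ = (c.P x i * c.P T k₀) * c.P Em k₀ * c.P Ei k₀ := by ring
        _ = (c.P T j₀ * c.P x m) * c.P Em k₀ * c.P Ei k₀ := by rw [hA]
        _ = (c.P T j₀ * c.P Ei k₀) * c.P x m * c.P Em k₀ := by ring
        _ = (c.P Ei j₀ * c.P T l₀) * c.P x m * c.P Em k₀ := by rw [hB]
        _ = c.P Ei j₀ * c.P x m * c.P Em k₀ * c.P T l₀ := by ring
    unfold fv
    rw [← hEi, ← hEm]
    have h1 := ne_of_gt hdeni
    have h2 := ne_of_gt hdenm
    field_simp
    linear_combination hGm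
  -- sum up
  have hsum : (∑ j, fv c j₀ k₀ (x j)) * c.P x m = fv c j₀ k₀ (x m) * 1 := by
    rw [← sumP c hN hx, Finset.sum_mul, Finset.mul_sum]
    exact Finset.sum_congr rfl fun j _ => by
      have := key j; linarith [this]
  have hSpos : 0 < ∑ j, fv c j₀ k₀ (x j) := by
    have hPm : 0 < c.P x m := P_pos c hSM hLCA hN hx hxm
    nlinarith [hsum]
  rw [eq_div_iff (ne_of_gt hSpos)]
  have hPm : 0 < c.P x m := P_pos c hSM hLCA hN hx hxm
  -- P x i * Σ = fv (x i) : from key i and hsum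
  have := key i
  -- P x i * Σ * P x m = fv (x i) * (fv x m) *1 ... cancel P x m
  apply mul_right_cancel₀ (ne_of_gt hPm)
  calc c.P x i * (∑ j, fv c j₀ k₀ (x j)) * c.P x m
      = c.P x i * ((∑ j, fv c j₀ k₀ (x j)) * c.P x m) := by ring
    _ = c.P x i * (fv c j₀ k₀ (x m) * 1) := by rw [hsum]
    _ = c.P x i * fv c j₀ k₀ (x m) := by ring
    _ = fv c j₀ k₀ (x i) * c.P x m := key i

end CSFproof
namespace CSFproof

open Finset CSF

set_option linter.unusedSectionVars false
set_option linter.unusedVariables false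

variable {N : Type*} [Fintype N] [DecidableEq N] (c : CSF N)

lemma fv_mono (hSM : c.SM) (hLCA : c.LCA) (hANY : c.ANY) (hN : 3 ≤ Fintype.card N)
    {j₀ k₀ : N} (hjk : j₀ ≠ k₀) {a b : ℝ} (ha : 0 ≤ a) (hab : a < b) :
    fv c j₀ k₀ a < fv c j₀ k₀ b := by
  set E := Evec j₀ k₀ a 1 with hE
  set E' := Evec j₀ k₀ b 1 with hE'
  have hEf : Feasible E := Evec_feasible hjk.symm ha one_pos
  have hE'f : Feasible E' := Evec_feasible hjk.symm (le_trans ha (le_of_lt hab)) one_pos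
  have hupd : Function.update E j₀ b = E' := by
    funext m
    rcases eq_or_ne m j₀ with rfl | hm
    · rw [Function.update_self, hE', Evec_apply_i]
    · rw [Function.update_of_ne hm, hE, hE']
      rcases eq_or_ne m k₀ with rfl | hm2
      · rw [Evec_apply_j' hjk.symm, Evec_apply_j' hjk.symm]
      · rw [Evec_apply_other hm hm2, Evec_apply_other hm hm2]
  have hPk : 0 < c.P E k₀ := fv_den_pos c hSM hLCA hN hjk ha
  have hlt1 : c.P E j₀ < 1 := by
    have hsum := sumP c hN hEf
    have hsub : ({j₀, k₀} : Finset N) ⊆ Finset.univ := Finset.subset_univ _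
    have := Finset.sum_le_sum_of_subset_of_nonneg hsub
      (fun m _ _ => P_nonneg c hN hEf m)
    rw [Finset.sum_pair hjk, hsum] at this
    linarith
  have hsm := hSM E hEf j₀ hlt1 b (by rw [hE, Evec_apply_i]; exact hab)
  rw [hupd] at hsm
  -- use the representation
  have hrepa := rep c hSM hLCA hANY hN hjk hEf j₀
  have hrepb := rep c hSM hLCA hANY hN hjk hE'f j₀
  set C := ∑ j ∈ Finset.univ.erase j₀, fv c j₀ k₀ (E j) with hC
  have hCeq : ∑ j ∈ Finset.univ.erase j₀, fv c j₀ k₀ (E' j) = C := by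
    refine Finset.sum_congr rfl fun m hm => ?_
    have hm' : m ≠ j₀ := (Finset.mem_erase.mp hm).1
    congr 1
    rw [hE, hE']
    rcases eq_or_ne m k₀ with rfl | hm2
    · rw [Evec_apply_j' hjk.symm, Evec_apply_j' hjk.symm]
    · rw [Evec_apply_other hm' hm2, Evec_apply_other hm' hm2]
  have hEj : E j₀ = a := by rw [hE, Evec_apply_i]
  have hE'j : E' j₀ = b := by rw [hE', Evec_apply_i]
  have hsa : ∑ j, fv c j₀ k₀ (E j) = fv c j₀ k₀ a + C := by
    rw [← Finset.add_sum_erase _ _ (Finset.mem_univ j₀), hEj, ← hC]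
  have hsb : ∑ j, fv c j₀ k₀ (E' j) = fv c j₀ k₀ b + C := by
    rw [← Finset.add_sum_erase _ _ (Finset.mem_univ j₀), hE'j, hCeq]
  have hCpos : 0 < C := by
    have hk₀ : k₀ ∈ Finset.univ.erase j₀ := Finset.mem_erase.mpr ⟨hjk.symm, Finset.mem_univ k₀⟩
    have hone : fv c j₀ k₀ (E k₀) = 1 := by
      rw [hE, Evec_apply_j' hjk.symm]; exact fv_one c hSM hLCA hANY hN hjk
    have := Finset.single_le_sum (f := fun j => fv c j₀ k₀ (E j))
      (fun m _ => fv_nonneg c hSM hLCA hN hjk (hEf.1 m)) hk₀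
    rw [hone] at this
    linarith
  rw [hrepa, hrepb, hEj, hE'j, hsa, hsb] at hsm
  have hfa : 0 ≤ fv c j₀ k₀ a := fv_nonneg c hSM hLCA hN hjk ha
  have hfb : 0 ≤ fv c j₀ k₀ b := fv_nonneg c hSM hLCA hN hjk (le_trans ha (le_of_lt hab))
  rw [div_lt_div_iff₀ (by linarith) (by linarith)] at hsm
  nlinarith [hsm]

/-- The subset formula: every `p M` has the ratio form with impact function `fv`. -/
lemma p_formula (hSM : c.SM) (hLCA : c.LCA) (hANY : c.ANY) (hN : 3 ≤ Fintype.card N)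
    {j₀ k₀ : N} (hjk : j₀ ≠ k₀) (M : Finset N) (hM : 2 ≤ M.card) (x : N → ℝ)
    (hx : FeasibleOn M x) {i : N} (hi : i ∈ M) :
    c.p M x i = fv c j₀ k₀ (x i) / ∑ j ∈ M, fv c j₀ k₀ (x j) := by
  classical
  set y : N → ℝ := fun k => if k ∈ M then x k else 0 with hy
  obtain ⟨i₀, hi₀M, hi₀⟩ := hx.2
  have hyi : ∀ j ∈ M, y j = x j := fun j hj => by rw [hy]; simp [hj]
  have hyf : Feasible y := by
    refine ⟨fun m => ?_, ⟨i₀, by rw [hyi i₀ hi₀M]; exact hi₀⟩⟩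
    rw [hy]; dsimp only; split_ifs
    · exact hx.1 _
    · exact le_refl 0
  have hrestr : c.p M x i = c.p M y i :=
    c.restrict M hM x y hx (fun j hj => (hyi j hj).symm) i hi
  have hLCAy := hLCA y hyf M hM ⟨i₀, hi₀M, by rw [hyi i₀ hi₀M]; exact hi₀⟩ i hi
  have hrep : ∀ j, c.P y j = fv c j₀ k₀ (y j) / ∑ k, fv c j₀ k₀ (y k) :=
    fun j => rep c hSM hLCA hANY hN hjk hyf j
  set S := ∑ k, fv c j₀ k₀ (y k) with hS
  have hi₀pos : 0 < x i₀ := lt_of_le_of_ne (hx.1 i₀) (Ne.symm hi₀)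
  have hSpos : 0 < S := by
    rw [hS]
    refine Finset.sum_pos' (fun m _ => fv_nonneg c hSM hLCA hN hjk (hyf.1 m))
      ⟨i₀, Finset.mem_univ i₀, ?_⟩
    rw [hyi i₀ hi₀M]; exact fv_pos c hSM hLCA hN hjk hi₀pos
  set SM' := ∑ j ∈ M, fv c j₀ k₀ (y j) with hSM'
  have hSMpos : 0 < SM' := by
    rw [hSM']
    refine Finset.sum_pos' (fun m hm => fv_nonneg c hSM hLCA hN hjk (hyf.1 m)) ⟨i₀, hi₀M, ?_⟩
    rw [hyi i₀ hi₀M]; exact fv_pos c hSM hLCA hN hjk hi₀pos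
  have hsumM : ∑ j ∈ M, c.P y j = SM' / S := by
    rw [hSM', Finset.sum_div]; exact Finset.sum_congr rfl fun j _ => hrep j
  rw [hrep i, hsumM] at hLCAy
  have h' : fv c j₀ k₀ (y i) = c.p M y i * SM' := by
    have hS0 : S ≠ 0 := ne_of_gt hSpos
    field_simp at hLCAy
    linarith [hLCAy]
  have hsum_eq : ∑ j ∈ M, fv c j₀ k₀ (x j) = SM' :=
    Finset.sum_congr rfl fun j hj => by rw [hyi j hj]
  rw [hrestr, hsum_eq, ← hyi i hi, eq_div_iff (ne_of_gt hSMpos)]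
  linarith [h']

end CSFproof
namespace CSFproof

open Finset CSF

set_option linter.unusedSectionVars false
set_option linter.unusedVariables false

variable {N : Type*} [Fintype N] [DecidableEq N] (c : CSF N)

/-- Deviation formula under the representation. -/
lemma dev_formula (hSM : c.SM) (hLCA : c.LCA) (hANY : c.ANY) (hN : 3 ≤ Fintype.card N)
    {j₀ k₀ : N} (hjk : j₀ ≠ k₀) {x : N → ℝ} (hx : Feasible x) {i j : N} (hij : i ≠ j)
    (hj : 0 < x j) :
    c.dev x i j = (fv c j₀ k₀ (x i) - fv c j₀ k₀ 0) / ∑ k, fv c j₀ k₀ (x k) := by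
  set x0 := Function.update x i 0 with hx0
  have hx0j : x0 j = x j := Function.update_of_ne (Ne.symm hij) _ _
  have hx0f : Feasible x0 := by
    refine ⟨fun m => ?_, ⟨j, by rw [hx0j]; exact ne_of_gt hj⟩⟩
    rcases eq_or_ne m i with rfl | hm
    · rw [hx0, Function.update_self]
    · rw [hx0, Function.update_of_ne hm]; exact hx.1 m
  set R := ∑ k ∈ Finset.univ.erase i, fv c j₀ k₀ (x k) with hR
  have hReq : ∑ k ∈ Finset.univ.erase i, fv c j₀ k₀ (x0 k) = R := by
    refine Finset.sum_congr rfl fun m hm => ?_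
    rw [hx0, Function.update_of_ne (Finset.mem_erase.mp hm).1]
  have hS : ∑ k, fv c j₀ k₀ (x k) = fv c j₀ k₀ (x i) + R := by
    rw [← Finset.add_sum_erase _ _ (Finset.mem_univ i), ← hR]
  have hS0 : ∑ k, fv c j₀ k₀ (x0 k) = fv c j₀ k₀ 0 + R := by
    rw [← Finset.add_sum_erase _ _ (Finset.mem_univ i), hReq, hx0, Function.update_self]
  have hRpos : 0 < R := by
    have hjmem : j ∈ Finset.univ.erase i := Finset.mem_erase.mpr ⟨Ne.symm hij, Finset.mem_univ j⟩
    have h1 := Finset.single_le_sum (f := fun k => fv c j₀ k₀ (x k))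
      (fun m _ => fv_nonneg c hSM hLCA hN hjk (hx.1 m)) hjmem
    have := fv_pos c hSM hLCA hN hjk hj
    rw [hR]; linarith
  have hfi : 0 ≤ fv c j₀ k₀ (x i) := fv_nonneg c hSM hLCA hN hjk (hx.1 i)
  have hf0 : 0 ≤ fv c j₀ k₀ 0 := fv_nonneg c hSM hLCA hN hjk (le_refl 0)
  have hfj : 0 < fv c j₀ k₀ (x j) := fv_pos c hSM hLCA hN hjk hj
  have hrep1 := rep c hSM hLCA hANY hN hjk hx j
  have hrep2 := rep c hSM hLCA hANY hN hjk hx0f j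
  unfold CSF.dev
  rw [← hx0, hrep1, hrep2, hx0j, hS, hS0]
  have h1 : fv c j₀ k₀ (x j) ≠ 0 := ne_of_gt hfj
  have h2 : fv c j₀ k₀ 0 + R ≠ 0 := by positivity
  have h3 : fv c j₀ k₀ (x i) + R ≠ 0 := by positivity
  field_simp
  ring

/-- Multiplicativity of the normalized impact via HRE. -/
lemma g_mul (hSM : c.SM) (hLCA : c.LCA) (hHRE : c.HRE) (hANY : c.ANY)
    (hN : 3 ≤ Fintype.card N) {j₀ k₀ : N} (hjk : j₀ ≠ k₀) {s t l : ℝ}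
    (hs : 0 < s) (ht : 0 < t) (hl : 0 < l) :
    (fv c j₀ k₀ (l * s) - fv c j₀ k₀ 0) * (fv c j₀ k₀ t - fv c j₀ k₀ 0)
      = (fv c j₀ k₀ s - fv c j₀ k₀ 0) * (fv c j₀ k₀ (l * t) - fv c j₀ k₀ 0) := by
  set x := Evec j₀ k₀ s t with hxd
  have hxj : x j₀ = s := Evec_apply_i _ _ _ _
  have hxk : x k₀ = t := Evec_apply_j' hjk.symm _ _
  have hxf : Feasible x := Evec_feasible hjk.symm (le_of_lt hs) ht
  have hscaled : (fun k => l * x k) = Evec j₀ k₀ (l * s) (l * t) := by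
    funext m
    rw [hxd]; unfold Evec; split_ifs <;> ring
  have hx'f : Feasible (fun k => l * x k) := by
    rw [hscaled]
    exact Evec_feasible hjk.symm (le_of_lt (mul_pos hl hs)) (mul_pos hl ht)
  have hx'j : (fun k => l * x k) j₀ = l * s := by rw [hscaled]; exact Evec_apply_i _ _ _ _
  have hx'k : (fun k => l * x k) k₀ = l * t := by rw [hscaled]; exact Evec_apply_j' hjk.symm _ _
  -- positivity side conditions
  have hupd1 : Function.update x j₀ 0 = Evec j₀ k₀ 0 t := by
    funext m
    rcases eq_or_ne m j₀ with rfl | hm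
    · rw [Function.update_self, Evec_apply_i]
    · rw [Function.update_of_ne hm, hxd]
      rcases eq_or_ne m k₀ with rfl | hm2
      · rw [Evec_apply_j' hjk.symm, Evec_apply_j' hjk.symm]
      · rw [Evec_apply_other hm hm2, Evec_apply_other hm hm2]
  have hupd2 : Function.update x k₀ 0 = Evec j₀ k₀ s 0 := by
    funext m
    rcases eq_or_ne m k₀ with rfl | hm
    · rw [Function.update_self, Evec_apply_j' hjk.symm]
    · rw [Function.update_of_ne hm, hxd]
      rcases eq_or_ne m j₀ with rfl | hm2
      · rw [Evec_apply_i, Evec_apply_i]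
      · rw [Evec_apply_other hm2 hm, Evec_apply_other hm2 hm]
  have hupd1' : Function.update (fun k => l * x k) j₀ 0 = Evec j₀ k₀ 0 (l * t) := by
    rw [hscaled]
    funext m
    rcases eq_or_ne m j₀ with rfl | hm
    · rw [Function.update_self, Evec_apply_i]
    · rw [Function.update_of_ne hm]
      rcases eq_or_ne m k₀ with rfl | hm2
      · rw [Evec_apply_j' hjk.symm, Evec_apply_j' hjk.symm]
      · rw [Evec_apply_other hm hm2, Evec_apply_other hm hm2]
  have hupd2' : Function.update (fun k => l * x k) k₀ 0 = Evec j₀ k₀ (l * s) 0 := by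
    rw [hscaled]
    funext m
    rcases eq_or_ne m k₀ with rfl | hm
    · rw [Function.update_self, Evec_apply_j' hjk.symm]
    · rw [Function.update_of_ne hm]
      rcases eq_or_ne m j₀ with rfl | hm2
      · rw [Evec_apply_i, Evec_apply_i]
      · rw [Evec_apply_other hm2 hm, Evec_apply_other hm2 hm]
  have hpos1 : 0 < c.P (Function.update x j₀ 0) k₀ := by
    rw [hupd1]
    exact P_pos c hSM hLCA hN (Evec_feasible hjk.symm (le_refl 0) ht)
      (by rw [Evec_apply_j' hjk.symm]; exact ht)
  have hpos2 : 0 < c.P (Function.update x k₀ 0) j₀ := by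
    rw [hupd2]
    exact P_pos c hSM hLCA hN
      ⟨Evec_nonneg (le_of_lt hs) (le_refl 0), ⟨j₀, by rw [Evec_apply_i]; exact ne_of_gt hs⟩⟩
      (by rw [Evec_apply_i]; exact hs)
  have hpos1' : 0 < c.P (Function.update (fun k => l * x k) j₀ 0) k₀ := by
    rw [hupd1']
    exact P_pos c hSM hLCA hN (Evec_feasible hjk.symm (le_refl 0) (mul_pos hl ht))
      (by rw [Evec_apply_j' hjk.symm]; exact mul_pos hl ht)
  have hpos2' : 0 < c.P (Function.update (fun k => l * x k) k₀ 0) j₀ := by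
    rw [hupd2']
    exact P_pos c hSM hLCA hN
      ⟨Evec_nonneg (le_of_lt (mul_pos hl hs)) (le_refl 0),
        ⟨j₀, by rw [Evec_apply_i]; exact ne_of_gt (mul_pos hl hs)⟩⟩
      (by rw [Evec_apply_i]; exact mul_pos hl hs)
  -- dev values
  have hdev1 : c.dev x j₀ k₀ = (fv c j₀ k₀ s - fv c j₀ k₀ 0) / ∑ k, fv c j₀ k₀ (x k) := by
    have h := dev_formula c hSM hLCA hANY hN hjk hxf hjk
      (show (0:ℝ) < x k₀ by rw [hxk]; exact ht)
    rw [h, hxj]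
  have hdev2 : c.dev x k₀ j₀ = (fv c j₀ k₀ t - fv c j₀ k₀ 0) / ∑ k, fv c j₀ k₀ (x k) := by
    have h := dev_formula c hSM hLCA hANY hN hjk hxf hjk.symm
      (show (0:ℝ) < x j₀ by rw [hxj]; exact hs)
    rw [h, hxk]
  have hdev1' : c.dev (fun k => l * x k) j₀ k₀
      = (fv c j₀ k₀ (l * s) - fv c j₀ k₀ 0) / ∑ k, fv c j₀ k₀ (l * x k) := by
    have h := dev_formula c hSM hLCA hANY hN hjk hx'f hjk
      (show (0:ℝ) < l * x k₀ by rw [hxk]; exact mul_pos hl ht)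
    rw [h, hxj]
  have hdev2' : c.dev (fun k => l * x k) k₀ j₀
      = (fv c j₀ k₀ (l * t) - fv c j₀ k₀ 0) / ∑ k, fv c j₀ k₀ (l * x k) := by
    have h := dev_formula c hSM hLCA hANY hN hjk hx'f hjk.symm
      (show (0:ℝ) < l * x j₀ by rw [hxj]; exact mul_pos hl hs)
    rw [h, hxk]
  -- positivity of the g-values and sums
  have hgs : 0 < fv c j₀ k₀ s - fv c j₀ k₀ 0 := by
    have := fv_mono c hSM hLCA hANY hN hjk (le_refl 0) hs; linarith
  have hgt : 0 < fv c j₀ k₀ t - fv c j₀ k₀ 0 := by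
    have := fv_mono c hSM hLCA hANY hN hjk (le_refl 0) ht; linarith
  have hgs' : 0 < fv c j₀ k₀ (l * s) - fv c j₀ k₀ 0 := by
    have := fv_mono c hSM hLCA hANY hN hjk (le_refl 0) (mul_pos hl hs); linarith
  have hgt' : 0 < fv c j₀ k₀ (l * t) - fv c j₀ k₀ 0 := by
    have := fv_mono c hSM hLCA hANY hN hjk (le_refl 0) (mul_pos hl ht); linarith
  have hSpos : 0 < ∑ k, fv c j₀ k₀ (x k) :=
    Finset.sum_pos' (fun m _ => fv_nonneg c hSM hLCA hN hjk (hxf.1 m))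
      ⟨j₀, Finset.mem_univ j₀, by rw [hxj]; exact fv_pos c hSM hLCA hN hjk hs⟩
  have hS'pos : 0 < ∑ k, fv c j₀ k₀ (l * x k) :=
    Finset.sum_pos' (fun m _ => fv_nonneg c hSM hLCA hN hjk (hx'f.1 m))
      ⟨j₀, Finset.mem_univ j₀, by
        show 0 < fv c j₀ k₀ (l * x j₀)
        rw [hxj]; exact fv_pos c hSM hLCA hN hjk (mul_pos hl hs)⟩
  -- apply HRE
  have hre := hHRE x hxf j₀ k₀ hjk (by rw [hxj]; exact hs) (by rw [hxk]; exact ht) l hl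
    hpos1 hpos2 hpos1' hpos2'
    (by rw [hdev2]; positivity)
    (by rw [hdev2']; positivity)
  have cancel : ∀ A B S : ℝ, B ≠ 0 → S ≠ 0 → A / S / (B / S) = A / B := by
    intro A B S hB hS
    field_simp
  rw [hdev1, hdev2, hdev1', hdev2',
    cancel _ _ _ (ne_of_gt hgt) (ne_of_gt hSpos),
    cancel _ _ _ (ne_of_gt hgt') (ne_of_gt hS'pos)] at hre
  rw [div_eq_div_iff (ne_of_gt hgt) (ne_of_gt hgt')] at hre
  linarith [hre]

end CSFproof
namespace CSFproof

open Finset CSF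

set_option linter.unusedSectionVars false
set_option linter.unusedVariables false

/-- A strictly monotone multiplicative function on `(0,∞)` is a power function. -/
lemma mono_mul_pow {h : ℝ → ℝ} (hpos : ∀ s, 0 < s → 0 < h s)
    (hmul : ∀ s t, 0 < s → 0 < t → h (s * t) = h s * h t)
    (hmono : ∀ a b, 0 < a → a < b → h a < h b) :
    ∃ r : ℝ, 0 < r ∧ ∀ s, 0 < s → h s = s ^ r := by
  set φ : ℝ → ℝ := fun u => Real.log (h (Real.exp u)) with hφ
  have hadd : ∀ u v, φ (u + v) = φ u + φ v := by
    intro u v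
    rw [hφ]
    simp only
    rw [Real.exp_add, hmul _ _ (Real.exp_pos u) (Real.exp_pos v),
      Real.log_mul (ne_of_gt (hpos _ (Real.exp_pos u))) (ne_of_gt (hpos _ (Real.exp_pos v)))]
  have hmono' : StrictMono φ := by
    intro u v huv
    exact Real.log_lt_log (hpos _ (Real.exp_pos u))
      (hmono _ _ (Real.exp_pos u) (Real.exp_lt_exp.mpr huv))
  set A : ℝ →+ ℝ := AddMonoidHom.mk' φ hadd with hA
  have hratq : ∀ (q : ℚ) (u : ℝ), φ ((q : ℝ) * u) = (q : ℝ) * φ u := by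
    intro q u
    have := map_rat_smul A q u
    rwa [Rat.smul_def, Rat.smul_def] at this
  have hzero : φ 0 = 0 := A.map_zero
  have hone : 0 < φ 1 := by
    have := hmono' (show (0:ℝ) < 1 by norm_num)
    rwa [hzero] at this
  have hlin : ∀ u, φ u = φ 1 * u := by
    intro u
    by_contra hne
    rcases lt_or_gt_of_ne hne with hlt | hgt
    · -- φ u < φ 1 * u ; pick rational q with φ u / φ 1 < q and q < u
      obtain ⟨q, hq1, hq2⟩ := exists_rat_btwn (show φ u / φ 1 < u by
        rw [div_lt_iff₀ hone]; linarith)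
      have h1 : φ ((q : ℝ) * 1) ≤ φ u := by
        rw [mul_one]
        exact (hmono'.le_iff_le).mpr (le_of_lt hq2)
      rw [hratq q 1] at h1
      rw [div_lt_iff₀ hone] at hq1
      linarith [mul_comm (φ 1) (q : ℝ)]
    · obtain ⟨q, hq1, hq2⟩ := exists_rat_btwn (show u < φ u / φ 1 by
        rw [lt_div_iff₀ hone]; linarith)
      have h1 : φ u ≤ φ ((q : ℝ) * 1) := by
        rw [mul_one]
        exact (hmono'.le_iff_le).mpr (le_of_lt hq1)
      rw [hratq q 1] at h1
      rw [lt_div_iff₀ hone] at hq2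
      linarith [mul_comm (φ 1) (q : ℝ)]
  refine ⟨φ 1, hone, fun s hs => ?_⟩
  have h1 : φ (Real.log s) = Real.log (h s) := by
    rw [hφ]; simp only; rw [Real.exp_log hs]
  have h2 : Real.log (h s) = φ 1 * Real.log s := by rw [← h1, hlin]
  rw [Real.rpow_def_of_pos hs, ← Real.exp_log (hpos s hs), h2]
  ring_nf

end CSFproof
namespace CSFproof

open Finset CSF

set_option linter.unusedSectionVars false
set_option linter.unusedVariables false

variable {N : Type*} [Fintype N] [DecidableEq N] (c : CSF N)

theorem forward (hN : 3 ≤ Fintype.card N) (hSM : c.SM) (hLCA : c.LCA) (hHRE : c.HRE)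
    (hANY : c.ANY) :
    ∃ (b r : ℝ), 0 ≤ b ∧ 0 < r ∧
      ∀ M : Finset N, 2 ≤ M.card → ∀ x, FeasibleOn M x → ∀ i ∈ M,
        c.p M x i = (b + x i ^ r) / ∑ j ∈ M, (b + x j ^ r) := by
  obtain ⟨j₀, k₀, hjk⟩ := Fintype.exists_pair_of_one_lt_card (α := N) (by omega)
  have hF1 : fv c j₀ k₀ 1 = 1 := fv_one c hSM hLCA hANY hN hjk
  have hF0 : 0 ≤ fv c j₀ k₀ 0 := fv_nonneg c hSM hLCA hN hjk (le_refl 0)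
  have hg1 : 0 < 1 - fv c j₀ k₀ 0 := by
    have := fv_mono c hSM hLCA hANY hN hjk (le_refl 0) one_pos
    rw [hF1] at this; linarith
  set h : ℝ → ℝ := fun u => (fv c j₀ k₀ u - fv c j₀ k₀ 0) / (1 - fv c j₀ k₀ 0) with hh
  have hpos : ∀ s, 0 < s → 0 < h s := by
    intro s hs
    have := fv_mono c hSM hLCA hANY hN hjk (le_refl 0) hs
    rw [hh]
    simp only
    exact div_pos (by linarith) hg1
  have hmul : ∀ s t, 0 < s → 0 < t → h (s * t) = h s * h t := by
    intro s t hs ht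
    have key := g_mul c hSM hLCA hHRE hANY hN hjk ht one_pos hs
    rw [mul_one, hF1] at key
    rw [hh]
    simp only
    rw [div_mul_div_comm, div_eq_div_iff (ne_of_gt hg1) (by positivity)]
    nlinarith [key]
  have hmono : ∀ a b, 0 < a → a < b → h a < h b := by
    intro a b ha hab
    have := fv_mono c hSM hLCA hANY hN hjk (le_of_lt ha) hab
    rw [hh]
    simp only
    rw [div_lt_div_iff₀ hg1 hg1]
    nlinarith [this, hg1]
  obtain ⟨r, hr, hpow⟩ := mono_mul_pow hpos hmul hmono
  set b := fv c j₀ k₀ 0 / (1 - fv c j₀ k₀ 0) with hb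
  have hb0 : 0 ≤ b := by rw [hb]; positivity
  have Fform : ∀ t, 0 ≤ t →
      fv c j₀ k₀ t = (1 - fv c j₀ k₀ 0) * (b + t ^ r) := by
    intro t ht
    rcases eq_or_lt_of_le ht with rfl | htpos
    · rw [Real.zero_rpow (ne_of_gt hr), add_zero, hb,
        mul_div_cancel₀ _ (ne_of_gt hg1)]
    · have := hpow t htpos
      rw [hh] at this
      simp only at this
      rw [mul_add, hb, mul_div_cancel₀ _ (ne_of_gt hg1)]
      rw [div_eq_iff (ne_of_gt hg1)] at this
      linarith [this]
  refine ⟨b, r, hb0, hr, fun M hM x hx i hi => ?_⟩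
  rw [p_formula c hSM hLCA hANY hN hjk M hM x hx hi]
  have hnum : fv c j₀ k₀ (x i) = (1 - fv c j₀ k₀ 0) * (b + x i ^ r) := Fform _ (hx.1 i)
  have hden : ∑ j ∈ M, fv c j₀ k₀ (x j)
      = (1 - fv c j₀ k₀ 0) * ∑ j ∈ M, (b + x j ^ r) := by
    rw [Finset.mul_sum]
    exact Finset.sum_congr rfl fun j _ => Fform _ (hx.1 j)
  rw [hnum, hden, mul_div_mul_left _ _ (ne_of_gt hg1)]

end CSFproof
namespace CSFproof

open Finset CSF

set_option linter.unusedSectionVars false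
set_option linter.unusedVariables false

variable {N : Type*} [Fintype N] [DecidableEq N] (c : CSF N)

section Backward

variable {b r : ℝ}

theorem backward (hN : 3 ≤ Fintype.card N) (hb : 0 ≤ b) (hr : 0 < r)
    (hp : ∀ M : Finset N, 2 ≤ M.card → ∀ x, FeasibleOn M x → ∀ i ∈ M,
      c.p M x i = (b + x i ^ r) / ∑ j ∈ M, (b + x j ^ r)) :
    c.SM ∧ c.LCA ∧ c.HRE ∧ c.ANY := by
  have hFnn : ∀ t : ℝ, 0 ≤ t → 0 ≤ b + t ^ r := fun t ht => by
    have := Real.rpow_nonneg ht r; linarith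
  have hFpos : ∀ t : ℝ, 0 < t → 0 < b + t ^ r := fun t ht => by
    have := Real.rpow_pos_of_pos ht r; linarith
  have hP : ∀ x : N → ℝ, Feasible x → ∀ i, c.P x i = (b + x i ^ r) / ∑ j, (b + x j ^ r) :=
    fun x hx i => hp Finset.univ (two_le_card hN) x (feasibleOn_univ hx) i (Finset.mem_univ i)
  have hSpos : ∀ x : N → ℝ, Feasible x → 0 < ∑ j, (b + x j ^ r) := by
    intro x hx
    obtain ⟨m, hm⟩ := hx.2
    exact Finset.sum_pos' (fun k _ => hFnn _ (hx.1 k))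
      ⟨m, Finset.mem_univ m, hFpos _ (lt_of_le_of_ne (hx.1 m) (Ne.symm hm))⟩
  have hsum_upd : ∀ (x : N → ℝ) (i : N) (v : ℝ),
      ∑ j, (b + (Function.update x i v j) ^ r)
        = (b + v ^ r) + ∑ j ∈ Finset.univ.erase i, (b + x j ^ r) := by
    intro x i v
    rw [← Finset.add_sum_erase _ _ (Finset.mem_univ i), Function.update_self]
    congr 1
    exact Finset.sum_congr rfl fun m hm => by
      rw [Function.update_of_ne (Finset.mem_erase.mp hm).1]
  have hsum_split : ∀ (x : N → ℝ) (i : N),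
      ∑ j, (b + x j ^ r) = (b + x i ^ r) + ∑ j ∈ Finset.univ.erase i, (b + x j ^ r) := by
    intro x i
    rw [← Finset.add_sum_erase _ _ (Finset.mem_univ i)]
  -- the deviation formula
  have hdev : ∀ x : N → ℝ, Feasible x → ∀ i j : N, i ≠ j → 0 < x j →
      c.dev x i j = x i ^ r / ∑ k, (b + x k ^ r) := by
    intro x hx i j hij hxj
    set x0 := Function.update x i 0 with hx0
    have hx0j : x0 j = x j := Function.update_of_ne (Ne.symm hij) _ _
    have hx0f : Feasible x0 := by
      refine ⟨fun m => ?_, ⟨j, by rw [hx0j]; exact ne_of_gt hxj⟩⟩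
      rcases eq_or_ne m i with rfl | hm
      · rw [hx0, Function.update_self]
      · rw [hx0, Function.update_of_ne hm]; exact hx.1 m
    set R := ∑ k ∈ Finset.univ.erase i, (b + x k ^ r) with hR
    have hS : ∑ k, (b + x k ^ r) = (b + x i ^ r) + R := hsum_split x i
    have hS0 : ∑ k, (b + x0 k ^ r) = b + R := by
      rw [hx0, hsum_upd x i 0, Real.zero_rpow (ne_of_gt hr), add_zero]
    have hRpos : 0 < R := by
      have hjmem : j ∈ Finset.univ.erase i :=
        Finset.mem_erase.mpr ⟨Ne.symm hij, Finset.mem_univ j⟩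
      have h1 := Finset.single_le_sum (f := fun k => b + x k ^ r)
        (fun m _ => hFnn _ (hx.1 m)) hjmem
      have := hFpos _ hxj
      rw [hR]; linarith
    have hfj : 0 < b + x j ^ r := hFpos _ hxj
    have hfi : 0 ≤ x i ^ r := Real.rpow_nonneg (hx.1 i) r
    unfold CSF.dev
    rw [← hx0, hP x hx j, hP x0 hx0f j, hx0j, hS, hS0]
    have h2 : b + R ≠ 0 := by positivity
    have h3 : (b + x i ^ r) + R ≠ 0 := by positivity
    have h4 : b + x j ^ r ≠ 0 := ne_of_gt hfj
    field_simp
    ring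
  refine ⟨?_, ?_, ?_, ?_⟩
  · -- SM
    intro x hx i hPi xi' hxi
    have hxi'pos : 0 < xi' := lt_of_le_of_lt (hx.1 i) hxi
    set y := Function.update x i xi' with hy
    have hyf : Feasible y := by
      refine ⟨fun m => ?_, ⟨i, by rw [hy, Function.update_self]; exact ne_of_gt hxi'pos⟩⟩
      rcases eq_or_ne m i with rfl | hm
      · rw [hy, Function.update_self]; exact le_of_lt hxi'pos
      · rw [hy, Function.update_of_ne hm]; exact hx.1 m
    set R := ∑ j ∈ Finset.univ.erase i, (b + x j ^ r) with hR
    have hS : ∑ j, (b + x j ^ r) = (b + x i ^ r) + R := hsum_split x i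
    have hSy : ∑ j, (b + y j ^ r) = (b + xi' ^ r) + R := hsum_upd x i xi'
    have hyi : y i = xi' := Function.update_self _ _ _
    have hRnn : 0 ≤ R := Finset.sum_nonneg fun m _ => hFnn _ (hx.1 m)
    have hStot : 0 < (b + x i ^ r) + R := by rw [← hS]; exact hSpos x hx
    have hRpos : 0 < R := by
      rcases lt_or_eq_of_le hRnn with h | h
      · exact h
      · exfalso
        have hPxi : c.P x i = 1 := by
          rw [hP x hx i, hS, ← h, add_zero, div_self]
          rw [← h, add_zero] at hStot
          exact ne_of_gt hStot
        rw [hPxi] at hPi; exact lt_irrefl 1 hPi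
    rw [hP x hx i, hP y hyf i, hyi, hS, hSy]
    have hlt : b + x i ^ r < b + xi' ^ r := by
      have := Real.rpow_lt_rpow (hx.1 i) hxi hr; linarith
    have hnn : 0 ≤ b + x i ^ r := hFnn _ (hx.1 i)
    rw [div_lt_div_iff₀ hStot (by linarith)]
    nlinarith
  · -- LCA
    intro x hx M hM hex i hi
    have hxM : FeasibleOn M x := ⟨hx.1, hex⟩
    obtain ⟨i₀, hi₀M, hi₀⟩ := hex
    have hMpos : 0 < ∑ j ∈ M, (b + x j ^ r) :=
      Finset.sum_pos' (fun m _ => hFnn _ (hx.1 m))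
        ⟨i₀, hi₀M, hFpos _ (lt_of_le_of_ne (hx.1 i₀) (Ne.symm hi₀))⟩
    have hsumM : ∑ j ∈ M, c.P x j = (∑ j ∈ M, (b + x j ^ r)) / ∑ j, (b + x j ^ r) := by
      rw [Finset.sum_div]
      exact Finset.sum_congr rfl fun j _ => hP x hx j
    rw [hP x hx i, hp M hM x hxM i hi, hsumM, div_mul_div_comm]
    rw [div_eq_div_iff (ne_of_gt (hSpos x hx))
      (ne_of_gt (mul_pos hMpos (hSpos x hx)))]
    ring
  · -- HRE
    intro x hx i j hij hxi hxj l hl p1 p2 p3 p4 d1 d2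
    have hx'f : Feasible (fun k => l * x k) := by
      refine ⟨fun m => mul_nonneg (le_of_lt hl) (hx.1 m), ⟨i, ?_⟩⟩
      exact ne_of_gt (mul_pos hl hxi)
    have e1 := hdev x hx i j hij hxj
    have e2 := hdev x hx j i (Ne.symm hij) hxi
    have e3 := hdev _ hx'f i j hij (mul_pos hl hxj)
    have e4 := hdev _ hx'f j i (Ne.symm hij) (mul_pos hl hxi)
    rw [e1, e2, e3, e4]
    have hxir : 0 < x i ^ r := Real.rpow_pos_of_pos hxi r
    have hxjr : 0 < x j ^ r := Real.rpow_pos_of_pos hxj r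
    have hlr : 0 < l ^ r := Real.rpow_pos_of_pos hl r
    have hS1 : 0 < ∑ k, (b + x k ^ r) := hSpos x hx
    have hS2 : 0 < ∑ k, (b + (l * x k) ^ r) := hSpos _ hx'f
    have cancel : ∀ A B S : ℝ, B ≠ 0 → S ≠ 0 → A / S / (B / S) = A / B := by
      intro A B S hB hS
      field_simp
    rw [cancel _ _ _ (ne_of_gt hxjr) (ne_of_gt hS1),
      cancel _ _ _ (ne_of_gt (Real.rpow_pos_of_pos (mul_pos hl hxj) r)) (ne_of_gt hS2)]
    rw [Real.mul_rpow (le_of_lt hl) (hx.1 i), Real.mul_rpow (le_of_lt hl) (hx.1 j),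
      mul_div_mul_left _ _ (ne_of_gt hlr)]
  · -- ANY
    intro π x hx i
    set y := fun k => x (π.symm k) with hy
    have hyf : Feasible y := by
      obtain ⟨m, hm⟩ := hx.2
      refine ⟨fun k => hx.1 _, ⟨π m, ?_⟩⟩
      rw [hy]; simp only [Equiv.symm_apply_apply]; exact hm
    rw [hP y hyf (π i), hP x hx i, hy]
    simp only [Equiv.symm_apply_apply]
    congr 1
    exact Fintype.sum_equiv π.symm _ _ fun k => rfl
end Backward

end CSFproof
/-- SM, LCA, HRE and ANY hold iff the CSF is the symmetric CSF with luck
`p_i^M(x) = (b + x_i^r) / ∑_{j∈M} (b + x_j^r)`. -/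
theorem statement3 {N : Type*} [Fintype N] [DecidableEq N]
    (hN : 3 ≤ Fintype.card N) (c : CSF N) :
    (c.SM ∧ c.LCA ∧ c.HRE ∧ c.ANY) ↔
      ∃ (b r : ℝ), 0 ≤ b ∧ 0 < r ∧
        ∀ M : Finset N, 2 ≤ M.card → ∀ x, FeasibleOn M x → ∀ i ∈ M,
          c.p M x i = (b + x i ^ r) / ∑ j ∈ M, (b + x j ^ r) := by
  constructor
  · rintro ⟨hSM, hLCA, hHRE, hANY⟩
    exact CSFproof.forward c hN hSM hLCA hHRE hANY
  · rintro ⟨b, r, hb, hr, hp⟩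
    exact CSFproof.backward c hN hb hr hp
end

section
/- A contest success function on N satisfies strict monotonicity (SM), Luce's choice axiom (LCA), and no advantageous reallocation (NAR) if and only if there exist parameters b_j ≥ 0 for each j ∈ N such that for every subset M ⊆ N with |M| ≥ 2, every i ∈ M, and every effort vector x^M ∈ ℝ_+^M \ {0}: p_i^M(x^M) = (b_i + x_i) / Σ_{j∈M} (b_j + x_j). -/
open Finset

section Auxiliary

open Finset

variable {N : Type*} [Fintype N] [DecidableEq N]

lemma card_univ2 {N : Type*} [Fintype N] (hN : 3 ≤ Fintype.card N) :
    2 ≤ (Finset.univ : Finset N).card := by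
  rw [Finset.card_univ]; omega

lemma sum_update' (f : N → ℝ) (i : N) (b : ℝ) :
    ∑ x, Function.update f i b x = (∑ x, f x) - f i + b := by
  rw [Finset.sum_update_of_mem (Finset.mem_univ i),
    Finset.sdiff_singleton_eq_erase, Finset.sum_erase_eq_sub (Finset.mem_univ i)]
  ring

lemma feas_sum_pos {x : N → ℝ} (hx : Feasible x) : 0 < ∑ j, x j := by
  obtain ⟨h0, i, hi⟩ := hx
  exact Finset.sum_pos' (fun j _ => h0 j)
    ⟨i, Finset.mem_univ i, lt_of_le_of_ne (h0 i) (Ne.symm hi)⟩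

lemma feas_of_sum_pos {x : N → ℝ} (h0 : ∀ i, 0 ≤ x i) (h : 0 < ∑ j, x j) : Feasible x := by
  refine ⟨h0, ?_⟩
  by_contra hc
  push_neg at hc
  rw [Finset.sum_congr rfl (fun j _ => hc j)] at h
  simp at h

lemma feasibleOn_univ {x : N → ℝ} : FeasibleOn Finset.univ x ↔ Feasible x := by
  simp [FeasibleOn, Feasible]

lemma exists_third (hN : 3 ≤ Fintype.card N) (i j : N) : ∃ h : N, h ≠ i ∧ h ≠ j := by
  by_contra hc
  push_neg at hc
  have hsub : (Finset.univ : Finset N) ⊆ {i, j} := by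
    intro a _
    by_cases hai : a = i
    · simp [hai]
    · simp [hc a hai]
  have h1 : Fintype.card N ≤ ({i, j} : Finset N).card := by
    simpa using Finset.card_le_card hsub
  have h2 : ({i, j} : Finset N).card ≤ 2 := by
    apply le_trans (Finset.card_insert_le _ _); simp
  omega

lemma pair_le_sum {x : N → ℝ} (h0 : ∀ i, 0 ≤ x i) {i j : N} (hij : i ≠ j) :
    x i + x j ≤ ∑ k, x k := by
  have h1 : ∑ k ∈ ({i, j} : Finset N), x k ≤ ∑ k, x k :=
    Finset.sum_le_sum_of_subset_of_nonneg (Finset.subset_univ _) (fun k _ _ => h0 k)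
  rwa [Finset.sum_pair hij] at h1

lemma single_le_sum' {x : N → ℝ} (h0 : ∀ i, 0 ≤ x i) (i : N) : x i ≤ ∑ k, x k :=
  Finset.single_le_sum (fun j _ => h0 j) (Finset.mem_univ i)

/-- A bounded additive function on `[0,S]` is linear. -/
lemma lin_of_add (S : ℝ) (hS : 0 < S) (φ : ℝ → ℝ)
    (hadd : ∀ u v, 0 ≤ u → 0 ≤ v → u + v ≤ S → φ (u + v) = φ u + φ v)
    (hbd : ∀ t, 0 ≤ t → t ≤ S → |φ t| ≤ 1) :
    ∀ t, 0 ≤ t → t ≤ S → φ t * S = t * φ S := by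
  have hφ0 : φ 0 = 0 := by
    have h := hadd 0 0 le_rfl le_rfl (by linarith)
    norm_num at h
    linarith
  set ψ : ℝ → ℝ := fun t => φ t * S - t * φ S with hψdef
  have hψadd : ∀ u v, 0 ≤ u → 0 ≤ v → u + v ≤ S → ψ (u + v) = ψ u + ψ v := by
    intro u v hu hv huv
    simp only [hψdef]
    rw [hadd u v hu hv huv]
    ring
  set K : ℝ := S + S * |φ S| with hK
  have hψbd : ∀ t, 0 ≤ t → t ≤ S → |ψ t| ≤ K := by
    intro t h0 h1
    have h2 : |φ t| ≤ 1 := hbd t h0 h1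
    have h3 : |φ t * S - t * φ S| ≤ |φ t * S| + |t * φ S| := by
      rw [sub_eq_add_neg]
      refine (abs_add_le _ _).trans ?_
      rw [abs_neg]
    rw [abs_mul, abs_mul, abs_of_pos hS, abs_of_nonneg h0] at h3
    have h3' : |ψ t| = |φ t * S - t * φ S| := by simp only [hψdef]
    rw [h3']
    have h4 : |φ t| * S ≤ 1 * S := by
      apply mul_le_mul_of_nonneg_right h2 hS.le
    have h5 : t * |φ S| ≤ S * |φ S| := by
      apply mul_le_mul_of_nonneg_right h1 (abs_nonneg _)
    rw [hK]; linarith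
  have hψ0 : ψ 0 = 0 := by simp [hψdef, hφ0]
  have hnsmul : ∀ n : ℕ, ∀ u, 0 ≤ u → (n : ℝ) * u ≤ S → ψ ((n : ℝ) * u) = n * ψ u := by
    intro n
    induction n with
    | zero => intro u hu h; simpa using hψ0
    | succ n ih =>
      intro u hu h
      have hn1 : (0:ℝ) ≤ (n:ℝ) * u := by positivity
      have hnu : (n : ℝ) * u ≤ S := by
        have : (n:ℝ) * u ≤ ((n:ℕ)+1 : ℝ) * u := by nlinarith
        push_cast at h ⊢
        nlinarith
      have heq : ((n+1 : ℕ) : ℝ) * u = (n:ℝ) * u + u := by push_cast; ring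
      rw [heq, hψadd ((n:ℝ)*u) u hn1 hu (by push_cast at h; linarith), ih u hu hnu]
      push_cast
      ring
  have hψS : ψ S = 0 := by simp [hψdef]; ring
  have hfrac : ∀ n : ℕ, 1 ≤ n → ψ (S / n) = 0 := by
    intro n hn
    have hnR : (0:ℝ) < n := by exact_mod_cast hn
    have h1 : (n : ℝ) * (S / n) = S := by field_simp
    have h2 := hnsmul n (S / n) (by positivity) (by rw [h1])
    rw [h1, hψS] at h2
    have := h2.symm
    rcases mul_eq_zero.mp this with h | h
    · exact absurd h (by exact_mod_cast hnR.ne')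
    · exact h
  intro t h0 h1
  have hmain : ψ t = 0 := by
    by_contra hne
    have habs : 0 < |ψ t| := abs_pos.mpr hne
    obtain ⟨n, hn⟩ := exists_nat_gt (K / |ψ t|)
    have hn1 : 1 ≤ n := by
      have hK0 : 0 < K / |ψ t| := by
        apply div_pos _ habs
        rw [hK]; positivity
      have : (0:ℝ) < n := lt_trans hK0 hn
      exact_mod_cast Nat.one_le_iff_ne_zero.mpr (by exact_mod_cast this.ne' : n ≠ 0)
    have hnR : (0:ℝ) < n := by exact_mod_cast hn1
    set k : ℕ := ⌊t * n / S⌋₊ with hk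
    have hk_le : (k : ℝ) ≤ t * n / S := Nat.floor_le (by positivity)
    have hk_lt : t * n / S < k + 1 := Nat.lt_floor_add_one _
    have hkn : (k : ℝ) ≤ n := by
      have h2 : t * n / S ≤ n := by
        rw [div_le_iff₀ hS]
        nlinarith
      linarith
    set r : ℝ := t - k * (S / n) with hr
    have hr0 : 0 ≤ r := by
      rw [hr]
      have : (k:ℝ) * (S / n) ≤ (t * n / S) * (S / n) := by
        apply mul_le_mul_of_nonneg_right hk_le (by positivity)
      have heq : (t * ↑n / S) * (S / ↑n) = t := by field_simp
      rw [heq] at this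
      linarith
    have hrn : (n:ℝ) * r < S := by
      rw [hr]
      have h2 : t < (k + 1) * (S / n) := by
        have := mul_lt_mul_of_pos_right hk_lt (show (0:ℝ) < S / n by positivity)
        have heq : (t * ↑n / S) * (S / ↑n) = t := by field_simp
        rw [heq] at this
        linarith
      have h3 : (n:ℝ) * (t - k * (S/n)) < n * ((k+1) * (S/n) - k * (S/n)) := by
        apply mul_lt_mul_of_pos_left _ hnR
        linarith
      have h4 : (n:ℝ) * (((k:ℝ)+1) * (S/↑n) - ↑k * (S/↑n)) = S := by field_simp; ring
      linarith
    have hkS : (k:ℝ) * (S / n) ≤ S := by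
      calc (k:ℝ) * (S/n) ≤ (n:ℝ) * (S/n) := by
            apply mul_le_mul_of_nonneg_right hkn (by positivity)
        _ = S := by field_simp
    have hkr : t = (k:ℝ) * (S / n) + r := by rw [hr]; ring
    have hψt : ψ t = ψ r := by
      rw [hkr, hψadd ((k:ℝ)*(S/n)) r (by positivity) hr0 (by rw [← hkr]; exact h1),
        hnsmul k (S/n) (by positivity) hkS, hfrac n hn1]
      ring
    have hnr : ψ ((n:ℝ) * r) = n * ψ r := hnsmul n r hr0 hrn.le
    have hbnd : |ψ ((n:ℝ) * r)| ≤ K := hψbd _ (by positivity) hrn.le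
    rw [hnr, ← hψt] at hbnd
    rw [abs_mul, Nat.abs_cast] at hbnd
    have : K < (n:ℝ) * |ψ t| := by
      rw [div_lt_iff₀ habs] at hn
      linarith
    linarith
  rw [hψdef] at hmain
  simp at hmain
  linarith


namespace CSF

variable (c : CSF N)



lemma P_sum (hN : 3 ≤ Fintype.card N) {x : N → ℝ} (hx : Feasible x) :
    ∑ i, c.P x i = 1 :=
  c.sum_eq_one Finset.univ (card_univ2 hN) x (feasibleOn_univ.2 hx)

lemma P_nonneg (hN : 3 ≤ Fintype.card N) {x : N → ℝ} (hx : Feasible x) (i : N) :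
    0 ≤ c.P x i :=
  c.nonneg Finset.univ (card_univ2 hN) x (feasibleOn_univ.2 hx) i (Finset.mem_univ i)

lemma P_le_one (hN : 3 ≤ Fintype.card N) {x : N → ℝ} (hx : Feasible x) (i : N) :
    c.P x i ≤ 1 :=
  c.le_one Finset.univ (card_univ2 hN) x (feasibleOn_univ.2 hx) i (Finset.mem_univ i)

/-- Claim A: under NAR, `P x k` depends only on `x k` and `∑ x`. -/
lemma PA (hN : 3 ≤ Fintype.card N) (hnar : c.NAR) :
    ∀ x y : N → ℝ, Feasible x → Feasible y → (∑ j, x j) = ∑ j, y j →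
    ∀ k, x k = y k → c.P x k = c.P y k := by
  suffices H : ∀ n : ℕ, ∀ x y : N → ℝ,
      (Finset.univ.filter (fun j => x j ≠ y j)).card ≤ n →
      Feasible x → Feasible y → (∑ j, x j) = ∑ j, y j →
      ∀ k, x k = y k → c.P x k = c.P y k by
    intro x y hx hy hsum k hk
    exact H _ x y le_rfl hx hy hsum k hk
  intro n
  induction n with
  | zero =>
    intro x y hcard _ _ _ k _
    have hxy : x = y := by
      funext j
      by_contra hj
      have : j ∈ Finset.univ.filter (fun j => x j ≠ y j) := by
        simp [hj]
      have := Finset.card_pos.mpr ⟨j, this⟩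
      omega
    rw [hxy]
  | succ n ih =>
    intro x y hcard hx hy hsum k hk
    by_cases hxy : x = y
    · rw [hxy]
    · have hne : ∃ j, x j ≠ y j := by
        by_contra hc; push_neg at hc; exact hxy (funext hc)
      obtain ⟨i, hi⟩ : ∃ i, y i < x i := by
        by_contra hc
        push_neg at hc
        obtain ⟨j, hj⟩ := hne
        have : ∑ j, x j < ∑ j, y j :=
          Finset.sum_lt_sum (fun m _ => hc m)
            ⟨j, Finset.mem_univ j, lt_of_le_of_ne (hc j) hj⟩
        linarith
      obtain ⟨j, hj⟩ : ∃ j, x j < y j := by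
        by_contra hc
        push_neg at hc
        have : ∑ j, y j < ∑ j, x j :=
          Finset.sum_lt_sum (fun m _ => hc m)
            ⟨i, Finset.mem_univ i, hi⟩
        linarith
      have hij : i ≠ j := fun h => by rw [h] at hi; linarith
      set x' : N → ℝ := Function.update (Function.update x i (y i)) j (x j + (x i - y i))
        with hx'def
      have hnar' := hnar x hx i j hij (y i) (x j + (x i - y i)) (hy.1 i)
        (by linarith [hx.1 j]) (by ring)
      have hx'i : x' i = y i := by
        rw [hx'def, Function.update_of_ne hij, Function.update_self]
      have hx'j : x' j = x j + (x i - y i) := by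
        rw [hx'def, Function.update_self]
      have hx'other : ∀ m, m ≠ i → m ≠ j → x' m = x m := by
        intro m hmi hmj
        rw [hx'def, Function.update_of_ne hmj, Function.update_of_ne hmi]
      have hsum' : ∑ m, x' m = ∑ m, x m := by
        rw [hx'def, sum_update', sum_update', Function.update_of_ne hij.symm]
        ring
      have hx' : Feasible x' := by
        apply feas_of_sum_pos
        · intro m
          by_cases hmi : m = i
          · rw [hmi, hx'i]; exact hy.1 i
          · by_cases hmj : m = j
            · rw [hmj, hx'j]; have := hx.1 j; linarith
            · rw [hx'other m hmi hmj]; exact hx.1 m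
        · rw [hsum']; exact feas_sum_pos hx
      have hki : k ≠ i := fun h => by rw [h] at hk; linarith [hk ▸ hi]
      have hkj : k ≠ j := fun h => by rw [h] at hk; linarith [hk ▸ hj]
      have hPk : c.P x' k = c.P x k := hnar' k hki hkj
      have hsub : Finset.univ.filter (fun m => x' m ≠ y m) ⊆
          (Finset.univ.filter (fun m => x m ≠ y m)).erase i := by
        intro m hm
        simp only [Finset.mem_filter, Finset.mem_univ, true_and] at hm
        have hmi : m ≠ i := by
          intro h; rw [h, hx'i] at hm; exact hm rfl
        rw [Finset.mem_erase]
        refine ⟨hmi, ?_⟩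
        simp only [Finset.mem_filter, Finset.mem_univ, true_and]
        by_cases hmj : m = j
        · rw [hmj]; exact ne_of_lt hj
        · rw [← hx'other m hmi hmj]; exact hm
      have hcard' : (Finset.univ.filter (fun m => x' m ≠ y m)).card ≤ n := by
        have h1 := Finset.card_le_card hsub
        have hi_mem : i ∈ Finset.univ.filter (fun m => x m ≠ y m) := by
          simp [ne_of_gt hi]
        rw [Finset.card_erase_of_mem hi_mem] at h1
        omega
      rw [← hPk]
      exact ih x' y hcard' hx' hy (by rw [hsum']; exact hsum) k (by rw [hx'other k hki hkj]; exact hk)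


/-- Claim B: for each total `S`, `P` is affine in own effort. -/
lemma KB (hN : 3 ≤ Fintype.card N) (hnar : c.NAR) (S : ℝ) :
    ∃ (A : N → ℝ) (C : ℝ), ∀ x, Feasible x → (∑ j, x j) = S →
      ∀ i, c.P x i = A i + C * x i := by
  rcases le_or_gt S 0 with hS | hS
  · refine ⟨fun _ => 0, 0, fun x hx hsum i => absurd (feas_sum_pos hx) ?_⟩
    rw [hsum]; exact not_lt.2 hS
  have hcard1 : 1 < Fintype.card N := by omega
  have hsigma : ∀ i : N, ∃ j, j ≠ i := fun i => Fintype.exists_ne_of_one_lt_card hcard1 i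
  choose σ hσ using hsigma
  set vv : N → ℝ → (N → ℝ) :=
    fun i t => Function.update (Function.update (fun _ => (0:ℝ)) (σ i) (S - t)) i t with hvv
  have vv_at : ∀ i t, vv i t i = t := by
    intro i t; simp [hvv]
  have vv_sum : ∀ i t, ∑ j, vv i t j = S := by
    intro i t
    simp only [hvv]
    rw [sum_update', sum_update', Function.update_of_ne (Ne.symm (hσ i))]
    simp
  have vv_feas : ∀ i t, 0 ≤ t → t ≤ S → Feasible (vv i t) := by
    intro i t h0 h1
    apply feas_of_sum_pos
    · intro m
      rcases eq_or_ne m i with hmi | hmi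
      · rw [hmi]; simp only [hvv]; simpa using h0
      · simp only [hvv]
        rw [Function.update_of_ne hmi]
        rcases eq_or_ne m (σ i) with hms | hms
        · rw [hms, Function.update_self]; linarith
        · rw [Function.update_of_ne hms]
    · rw [vv_sum]; exact hS
  set G : N → ℝ → ℝ := fun i t => c.P (vv i t) i with hG
  have Gval : ∀ x, Feasible x → (∑ j, x j) = S → ∀ i, c.P x i = G i (x i) := by
    intro x hx hsum i
    have h0 : 0 ≤ x i := hx.1 i
    have h1 : x i ≤ S := hsum ▸ single_le_sum' hx.1 i
    rw [hG]
    exact c.PA hN hnar x (vv i (x i)) hx (vv_feas i _ h0 h1)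
      (by rw [hsum, vv_sum]) i (vv_at i (x i)).symm
  have Gbounds : ∀ i t, 0 ≤ t → t ≤ S → 0 ≤ G i t ∧ G i t ≤ 1 := by
    intro i t h0 h1
    rw [hG]
    exact ⟨c.P_nonneg hN (vv_feas i t h0 h1) i, c.P_le_one hN (vv_feas i t h0 h1) i⟩
  have inter : ∀ i j, i ≠ j → ∀ u t w, 0 ≤ u → 0 ≤ t → 0 ≤ w → u + t + w ≤ S →
      G i (u+t) + G j w = G i u + G j (w+t) := by
    intro i j hij u t w hu ht hw hsum3
    obtain ⟨h, hhi, hhj⟩ := exists_third hN i j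
    set z : N → ℝ := Function.update (Function.update (Function.update
      (fun _ => (0:ℝ)) h (S - (u+t+w))) j w) i (u+t) with hz
    have hzi : z i = u + t := by rw [hz]; simp
    have hzj : z j = w := by
      rw [hz, Function.update_of_ne hij.symm, Function.update_self]
    have hzsum : ∑ m, z m = S := by
      rw [hz]
      rw [sum_update', sum_update', sum_update', Function.update_of_ne hij,
        Function.update_of_ne (Ne.symm hhi), Function.update_of_ne (Ne.symm hhj)]
      simp
      ring
    have hznn : ∀ m, 0 ≤ z m := by
      intro m
      rcases eq_or_ne m i with hmi | hmi
      · rw [hmi, hzi]; linarith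
      · rw [hz]
        rw [Function.update_of_ne hmi]
        rcases eq_or_ne m j with hmj | hmj
        · rw [hmj, Function.update_self]; exact hw
        · rw [Function.update_of_ne hmj]
          rcases eq_or_ne m h with hmh | hmh
          · rw [hmh, Function.update_self]; linarith
          · rw [Function.update_of_ne hmh]
    have hzfeas : Feasible z := feas_of_sum_pos hznn (by rw [hzsum]; exact hS)
    set z' : N → ℝ := Function.update (Function.update z i u) j (w+t) with hz'
    have hz'i : z' i = u := by
      rw [hz', Function.update_of_ne hij, Function.update_self]
    have hz'j : z' j = w + t := by rw [hz', Function.update_self]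
    have hz'sum : ∑ m, z' m = S := by
      rw [hz', sum_update', sum_update', Function.update_of_ne hij.symm,
        hzi, hzj, hzsum]
      ring
    have hz'nn : ∀ m, 0 ≤ z' m := by
      intro m
      rcases eq_or_ne m j with hmj | hmj
      · rw [hmj, hz'j]; linarith
      · rw [hz', Function.update_of_ne hmj]
        rcases eq_or_ne m i with hmi | hmi
        · rw [hmi, Function.update_self]; exact hu
        · rw [Function.update_of_ne hmi]; exact hznn m
    have hz'feas : Feasible z' := feas_of_sum_pos hz'nn (by rw [hz'sum]; exact hS)
    have hP := hnar z hzfeas i j hij u (w+t) hu (by linarith)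
      (by rw [hzi, hzj]; ring)
    have hsplit : ∀ (f : N → ℝ), ∑ m, f m
        = f i + (f j + ∑ m ∈ (Finset.univ.erase i).erase j, f m) := by
      intro f
      rw [Finset.add_sum_erase _ f (Finset.mem_erase.mpr ⟨hij.symm, Finset.mem_univ j⟩),
        Finset.add_sum_erase _ f (Finset.mem_univ i)]
    have h1 : ∑ m, c.P z m = 1 := c.P_sum hN hzfeas
    have h2 : ∑ m, c.P z' m = 1 := c.P_sum hN hz'feas
    have htail : ∑ m ∈ (Finset.univ.erase i).erase j, c.P z' m
        = ∑ m ∈ (Finset.univ.erase i).erase j, c.P z m := by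
      refine Finset.sum_congr rfl (fun m hm => ?_)
      rw [Finset.mem_erase, Finset.mem_erase] at hm
      rw [hz']
      exact hP m hm.2.1 hm.1
    rw [hsplit (c.P z)] at h1
    rw [hsplit (c.P z'), htail] at h2
    have e1 : c.P z i = G i (u+t) := by rw [Gval z hzfeas hzsum i, hzi]
    have e2 : c.P z j = G j w := by rw [Gval z hzfeas hzsum j, hzj]
    have e3 : c.P z' i = G i u := by rw [Gval z' hz'feas hz'sum i, hz'i]
    have e4 : c.P z' j = G j (w+t) := by rw [Gval z' hz'feas hz'sum j, hz'j]
    rw [e1, e2] at h1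
    rw [e3, e4] at h2
    linarith
  obtain ⟨i0⟩ : Nonempty N := Fintype.card_pos_iff.mp (by omega)
  have inc : ∀ i u t, 0 ≤ u → 0 ≤ t → u + t ≤ S →
      G i (u+t) = G i u + (G i0 t - G i0 0) := by
    intro i u t hu ht hut
    by_cases hi : i = i0
    · subst hi
      obtain ⟨j, hji, _⟩ := exists_third hN i i
      have h1 := inter i j (Ne.symm hji) u t 0 hu ht le_rfl (by linarith)
      have h2 := inter j i hji 0 t 0 le_rfl ht le_rfl (by linarith)
      rw [zero_add] at h1 h2
      linarith
    · have h1 := inter i i0 hi u t 0 hu ht le_rfl (by linarith)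
      rw [zero_add] at h1
      linarith
  have hφadd : ∀ u v, 0 ≤ u → 0 ≤ v → u + v ≤ S →
      (G i0 (u+v) - G i0 0) = (G i0 u - G i0 0) + (G i0 v - G i0 0) := by
    intro u v hu hv huv
    have e1 := inc i0 u v hu hv huv
    linarith
  have hφbd : ∀ t, 0 ≤ t → t ≤ S → |G i0 t - G i0 0| ≤ 1 := by
    intro t h0 h1
    obtain ⟨b1, b2⟩ := Gbounds i0 t h0 h1
    obtain ⟨b3, b4⟩ := Gbounds i0 0 le_rfl hS.le
    rw [abs_le]
    constructor <;> linarith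
  have hlin := lin_of_add S hS (fun t => G i0 t - G i0 0) hφadd hφbd
  refine ⟨fun i => G i 0, (G i0 S - G i0 0) / S, ?_⟩
  intro x hx hsum i
  have h0 := hx.1 i
  have h1 : x i ≤ S := hsum ▸ single_le_sum' hx.1 i
  have e1 : c.P x i = G i (x i) := Gval x hx hsum i
  have e2 : G i (x i) = G i 0 + (G i0 (x i) - G i0 0) := by
    have := inc i 0 (x i) le_rfl h0 (by linarith)
    rwa [zero_add] at this
  have e3 : (G i0 (x i) - G i0 0) * S = x i * (G i0 S - G i0 0) := hlin (x i) h0 h1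
  have e4 : G i0 (x i) - G i0 0 = (G i0 S - G i0 0) / S * x i := by
    field_simp
    linarith
  rw [e1, e2, e4]

lemma forward (hN : 3 ≤ Fintype.card N) (hsm : c.SM) (hlca : c.LCA) (hnar : c.NAR) :
    ∃ b : N → ℝ, (∀ j, 0 ≤ b j) ∧
      ∀ M : Finset N, 2 ≤ M.card → ∀ x, FeasibleOn M x → ∀ i ∈ M,
        c.p M x i = (b i + x i) / ∑ j ∈ M, (b j + x j) := by
  have hcard2 := card_univ2 (N := N) hN
  have hcard1 : 1 < Fintype.card N := by omega
  obtain ⟨h0⟩ : Nonempty N := Fintype.card_pos_iff.mp (by omega)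
  choose A C hAC using c.KB hN hnar
  have hrep : ∀ x, Feasible x → ∀ i, c.P x i = A (∑ j, x j) i + C (∑ j, x j) * x i :=
    fun x hx i => hAC (∑ j, x j) x hx rfl i
  -- single-point configurations
  set dd : N → ℝ → (N → ℝ) := fun h S => Function.update (fun _ => (0:ℝ)) h S with hdd
  have hdds : ∀ h S, ∑ j, dd h S j = S := by
    intro h S; simp only [hdd]; rw [sum_update']; simp
  have hddnn : ∀ h S, 0 ≤ S → ∀ m, 0 ≤ dd h S m := by
    intro h S hS m
    simp only [hdd]
    rcases eq_or_ne m h with hmh | hmh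
    · rw [hmh, Function.update_self]; exact hS
    · rw [Function.update_of_ne hmh]
  have hddf : ∀ h S, 0 < S → Feasible (dd h S) :=
    fun h S hS => feas_of_sum_pos (hddnn h S hS.le) (by rw [hdds]; exact hS)
  have hdd_at : ∀ h S, dd h S h = S := by
    intro h S; simp only [hdd]; rw [Function.update_self]
  have hdd_ne : ∀ h S m, m ≠ h → dd h S m = 0 := by
    intro h S m hm; simp only [hdd]; rw [Function.update_of_ne hm]
  -- the sum rule
  have hsumA : ∀ S, 0 < S → (∑ k, A S k) + C S * S = 1 := by
    intro S hS
    have hf := hddf h0 S hS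
    have h1 : ∑ k, c.P (dd h0 S) k = 1 := c.P_sum hN hf
    have h2 : ∀ k, c.P (dd h0 S) k = A S k + C S * dd h0 S k := by
      intro k
      have := hrep (dd h0 S) hf k
      rwa [hdds h0 S] at this
    rw [Finset.sum_congr rfl (fun k _ => h2 k), Finset.sum_add_distrib,
      ← Finset.mul_sum, hdds h0 S] at h1
    exact h1
  -- nondegeneracy
  have hND : ∀ x, Feasible x → ∀ i j, j ≠ i → 0 < x j → c.P x i < 1 := by
    intro x hx i j hji hxj
    by_contra hc
    push_neg at hc
    have hP1 : c.P x i = 1 := le_antisymm (c.P_le_one hN hx i) hc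
    set S := ∑ m, x m with hSdef
    have hS : 0 < S := feas_sum_pos hx
    have hpairs : x i + x j ≤ S := pair_le_sum hx.1 (Ne.symm hji)
    have huS : x i < S := by linarith
    have hAi : A S i + C S * x i = 1 := by
      rw [← hrep x hx i]
      exact hP1
    have hzero : ∀ y, Feasible y → (∑ m, y m) = S → y i = x i →
        ∀ k, k ≠ i → c.P y k = 0 := by
      intro y hy hySum hyi k hki
      have h1 : ∑ m, c.P y m = 1 := c.P_sum hN hy
      have hyP1 : c.P y i = 1 := by
        rw [hrep y hy i, hySum, hyi]
        exact hAi
      have hs := Finset.add_sum_erase Finset.univ (c.P y) (Finset.mem_univ i)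
      rw [hyP1, h1] at hs
      have h2 : ∑ m ∈ Finset.univ.erase i, c.P y m = 0 := by linarith
      have hnn : ∀ m ∈ Finset.univ.erase i, 0 ≤ c.P y m := fun m _ => c.P_nonneg hN hy m
      exact (Finset.sum_eq_zero_iff_of_nonneg hnn).mp h2 k
        (Finset.mem_erase.mpr ⟨hki, Finset.mem_univ k⟩)
    have hAk : ∀ k, k ≠ i → A S k + C S * (S - x i) = 0 := by
      intro k hki
      set y : N → ℝ := Function.update (Function.update (fun _ => (0:ℝ)) k (S - x i)) i (x i)
        with hy
      have hyi : y i = x i := by rw [hy, Function.update_self]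
      have hyk : y k = S - x i := by
        rw [hy, Function.update_of_ne hki, Function.update_self]
      have hysum : ∑ m, y m = S := by
        rw [hy, sum_update', sum_update', Function.update_of_ne (Ne.symm hki)]
        simp
      have hynn : ∀ m, 0 ≤ y m := by
        intro m
        rcases eq_or_ne m i with hmi | hmi
        · rw [hmi, hyi]; exact hx.1 i
        · rw [hy, Function.update_of_ne hmi]
          rcases eq_or_ne m k with hmk | hmk
          · rw [hmk, Function.update_self]; linarith
          · rw [Function.update_of_ne hmk]
      have hyf : Feasible y := feas_of_sum_pos hynn (by rw [hysum]; exact hS)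
      have h1 := hzero y hyf hysum hyi k hki
      rw [hrep y hyf k, hysum, hyk] at h1
      exact h1
    have hCS : C S = 0 := by
      have h1 := hsumA S hS
      have h2 : ∑ k, A S k = A S i + ∑ k ∈ Finset.univ.erase i, A S k :=
        (Finset.add_sum_erase _ _ (Finset.mem_univ i)).symm
      have h3 : ∀ k ∈ Finset.univ.erase i, A S k = -(C S * (S - x i)) := by
        intro k hk
        have := hAk k (Finset.mem_erase.mp hk).1
        linarith
      rw [Finset.sum_congr rfl h3, Finset.sum_const,
        Finset.card_erase_of_mem (Finset.mem_univ i), Finset.card_univ] at h2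
      have hsmul : ((Fintype.card N - 1 : ℕ) : ℝ) = (Fintype.card N : ℝ) - 1 := by
        have h4 : 1 ≤ Fintype.card N := by omega
        push_cast [h4]
        ring
      rw [nsmul_eq_mul, hsmul] at h2
      have hfinal : ((Fintype.card N : ℝ) - 2) * (C S * (S - x i)) = 0 := by
        linear_combination h2 - h1 + hAi
      have hn3 : (3:ℝ) ≤ (Fintype.card N : ℝ) := by exact_mod_cast hN
      rcases mul_eq_zero.mp hfinal with h | h
      · linarith
      · rcases mul_eq_zero.mp h with h' | h'
        · exact h'
        · linarith
    have hA1 : A S i = 1 := by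
      rw [hCS] at hAi
      linarith
    have hA0 : ∀ k, k ≠ i → A S k = 0 := by
      intro k hk
      have := hAk k hk
      rw [hCS] at this
      linarith
    have hall : ∀ y, Feasible y → (∑ m, y m) = S →
        c.P y i = 1 ∧ ∀ k, k ≠ i → c.P y k = 0 := by
      intro y hy hys
      constructor
      · rw [hrep y hy i, hys, hCS, hA1]; ring
      · intro k hk
        rw [hrep y hy k, hys, hCS, hA0 k hk]; ring
    obtain ⟨m, hmi, hmj⟩ := exists_third hN i j
    set M : Finset N := {i, j} with hM
    have hiM : i ∈ M := by rw [hM]; simp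
    have hjM : j ∈ M := by rw [hM]; simp
    have hMcard : 2 ≤ M.card := by
      rw [hM, Finset.card_insert_of_notMem (by simp [Ne.symm hji]), Finset.card_singleton]
    -- config z: all mass at j
    have hzf : Feasible (dd j S) := hddf j S hS
    have hzsum : ∑ m, dd j S m = S := hdds j S
    have hPzi := (hall (dd j S) hzf hzsum).1
    have hPzj := (hall (dd j S) hzf hzsum).2 j hji
    have hact : ∃ k ∈ M, dd j S k ≠ 0 := ⟨j, hjM, by rw [hdd_at]; exact hS.ne'⟩
    have hlcaz := hlca (dd j S) hzf M hMcard hact i hiM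
    have hsum2 : ∑ k ∈ M, c.P (dd j S) k = 1 := by
      rw [hM, Finset.sum_pair (Ne.symm hji), hPzi, hPzj]
      ring
    rw [hsum2, mul_one, hPzi] at hlcaz
    have hMz : FeasibleOn M (dd j S) := ⟨hddnn j S hS.le, hact⟩
    have hsum1 := c.sum_eq_one M hMcard (dd j S) hMz
    rw [hM, Finset.sum_pair (Ne.symm hji)] at hsum1
    have hpzj : c.p M (dd j S) j = 0 := by
      rw [hM] at hlcaz ⊢
      linarith
    -- config y: all mass at m, then bump j
    have hyf : Feasible (dd m S) := hddf m S hS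
    have hysum : ∑ k, dd m S k = S := hdds m S
    have hPyj : c.P (dd m S) j = 0 := (hall (dd m S) hyf hysum).2 j hji
    have hyj0 : dd m S j = 0 := hdd_ne m S j (Ne.symm hmj)
    have hsm' := hsm (dd m S) hyf j (by rw [hPyj]; norm_num) S (by rw [hyj0]; exact hS)
    set y' : N → ℝ := Function.update (dd m S) j S with hy'
    have hy'j : y' j = S := by rw [hy', Function.update_self]
    have hy'i : y' i = 0 := by
      rw [hy', Function.update_of_ne (Ne.symm hji)]
      exact hdd_ne m S i (Ne.symm hmi)
    have hy'nn : ∀ k, 0 ≤ y' k := by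
      intro k
      rcases eq_or_ne k j with hkj | hkj
      · rw [hkj, hy'j]; exact hS.le
      · rw [hy', Function.update_of_ne hkj]
        exact hddnn m S hS.le k
    have hy'sum : ∑ k, y' k = 2 * S := by
      rw [hy', sum_update', hysum, hyj0]
      ring
    have hy'f : Feasible y' := feas_of_sum_pos hy'nn (by rw [hy'sum]; linarith)
    have hact' : ∃ k ∈ M, y' k ≠ 0 := ⟨j, hjM, by rw [hy'j]; exact hS.ne'⟩
    have hlcay := hlca y' hy'f M hMcard hact' j hjM
    have hagree : ∀ k ∈ M, y' k = dd j S k := by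
      intro k hk
      rw [hM] at hk
      rcases Finset.mem_insert.mp hk with hk | hk
      · rw [hk, hy'i, hdd_ne j S i (Ne.symm hji)]
      · rw [Finset.mem_singleton.mp hk, hy'j, hdd_at]
    have hrest := c.restrict M hMcard y' (dd j S) ⟨hy'nn, hact'⟩ hagree j hjM
    rw [hrest, hpzj] at hlcay
    rw [hPyj] at hsm'
    rw [hlcay] at hsm'
    simp at hsm'
  -- the key ratio relation
  have hTriple : ∀ (m i h : N), i ≠ m → h ≠ m → h ≠ i → ∀ s0 : ℝ, 0 < s0 →
      ∀ S S' : ℝ, s0 ≤ S → s0 ≤ S' → ∃ Q Q' : ℝ, 0 < Q ∧ 0 < Q' ∧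
        ∀ t, 0 ≤ t → t ≤ s0 →
          (A S i + C S * t) * Q' = (A S' i + C S' * t) * Q := by
    intro m i h him hhm hhi s0 hs0 S S' hsS hsS'
    set M : Finset N := Finset.univ.erase m with hM
    have hiM : i ∈ M := Finset.mem_erase.mpr ⟨him, Finset.mem_univ i⟩
    have hhM : h ∈ M := Finset.mem_erase.mpr ⟨hhm, Finset.mem_univ h⟩
    have hMcard : 2 ≤ M.card := by
      rw [hM, Finset.card_erase_of_mem (Finset.mem_univ m), Finset.card_univ]
      omega
    set X : ℝ → ℝ → (N → ℝ) := fun t w => Function.update (Function.update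
      (Function.update (fun _ => (0:ℝ)) m w) h (s0 - t)) i t with hX
    have hXi : ∀ t w, X t w i = t := by
      intro t w; simp only [hX]; rw [Function.update_self]
    have hXh : ∀ t w, X t w h = s0 - t := by
      intro t w; simp only [hX]
      rw [Function.update_of_ne hhi, Function.update_self]
    have hXm : ∀ t w, X t w m = w := by
      intro t w; simp only [hX]
      rw [Function.update_of_ne (Ne.symm him), Function.update_of_ne (Ne.symm hhm),
        Function.update_self]
    have hXsum : ∀ t w, ∑ k, X t w k = s0 + w := by
      intro t w; simp only [hX]
      rw [sum_update', sum_update', sum_update', Function.update_of_ne (Ne.symm hhi),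
        Function.update_of_ne him, Function.update_of_ne hhm]
      simp
      ring
    have hXnn : ∀ t w, 0 ≤ t → t ≤ s0 → 0 ≤ w → ∀ k, 0 ≤ X t w k := by
      intro t w ht hts hw k
      rcases eq_or_ne k i with hk | hk
      · rw [hk, hXi]; exact ht
      · rcases eq_or_ne k h with hk2 | hk2
        · rw [hk2, hXh]; linarith
        · rcases eq_or_ne k m with hk3 | hk3
          · rw [hk3, hXm]; exact hw
          · simp only [hX]
            rw [Function.update_of_ne hk, Function.update_of_ne hk2,
              Function.update_of_ne hk3]
    have hXf : ∀ t w, 0 ≤ t → t ≤ s0 → 0 ≤ w → Feasible (X t w) := by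
      intro t w ht hts hw
      exact feas_of_sum_pos (hXnn t w ht hts hw) (by rw [hXsum]; linarith)
    have hact : ∀ t w, 0 ≤ t → t ≤ s0 → ∃ k ∈ M, X t w k ≠ 0 := by
      intro t w ht hts
      rcases eq_or_ne t 0 with ht0 | ht0
      · exact ⟨h, hhM, by rw [hXh, ht0]; simpa using hs0.ne'⟩
      · exact ⟨i, hiM, by rw [hXi]; exact ht0⟩
    have hPmlt : ∀ t w, 0 ≤ t → t ≤ s0 → 0 ≤ w → c.P (X t w) m < 1 := by
      intro t w ht hts hw
      rcases eq_or_ne t 0 with ht0 | ht0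
      · exact hND (X t w) (hXf t w ht hts hw) m h hhm
          (by rw [hXh, ht0]; simpa using hs0)
      · exact hND (X t w) (hXf t w ht hts hw) m i him
          (by rw [hXi]; exact lt_of_le_of_ne ht (Ne.symm ht0))
    have hPi : ∀ t w, 0 ≤ t → t ≤ s0 → 0 ≤ w →
        c.P (X t w) i = A (s0 + w) i + C (s0 + w) * t := by
      intro t w ht hts hw
      rw [hrep (X t w) (hXf t w ht hts hw) i, hXsum, hXi]
    have hPm : ∀ t w, 0 ≤ t → t ≤ s0 → 0 ≤ w →
        c.P (X t w) m = A (s0 + w) m + C (s0 + w) * w := by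
      intro t w ht hts hw
      rw [hrep (X t w) (hXf t w ht hts hw) m, hXsum, hXm]
    have hL : ∀ t w, 0 ≤ t → t ≤ s0 → 0 ≤ w →
        c.P (X t w) i = c.p M (X t w) i * (1 - c.P (X t w) m) := by
      intro t w ht hts hw
      have h1 := hlca (X t w) (hXf t w ht hts hw) M hMcard (hact t w ht hts) i hiM
      have h2 : ∑ k ∈ M, c.P (X t w) k = 1 - c.P (X t w) m := by
        have h3 := c.P_sum hN (hXf t w ht hts hw)
        have h4 := Finset.add_sum_erase Finset.univ (c.P (X t w)) (Finset.mem_univ m)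
        rw [h3] at h4
        rw [hM]
        linarith
      rw [h2] at h1
      exact h1
    set w1 : ℝ := S - s0 with hw1
    set w2 : ℝ := S' - s0 with hw2
    have hw1n : 0 ≤ w1 := by rw [hw1]; linarith
    have hw2n : 0 ≤ w2 := by rw [hw2]; linarith
    have hsw1 : s0 + w1 = S := by rw [hw1]; ring
    have hsw2 : s0 + w2 = S' := by rw [hw2]; ring
    refine ⟨1 - (A S m + C S * w1), 1 - (A S' m + C S' * w2), ?_, ?_, ?_⟩
    · have := hPmlt 0 w1 le_rfl hs0.le hw1n
      rw [hPm 0 w1 le_rfl hs0.le hw1n, hsw1] at this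
      linarith
    · have := hPmlt 0 w2 le_rfl hs0.le hw2n
      rw [hPm 0 w2 le_rfl hs0.le hw2n, hsw2] at this
      linarith
    · intro t ht hts
      have e1 := hL t w1 ht hts hw1n
      have e2 := hL t w2 ht hts hw2n
      rw [hPi t w1 ht hts hw1n, hPm t w1 ht hts hw1n, hsw1] at e1
      rw [hPi t w2 ht hts hw2n, hPm t w2 ht hts hw2n, hsw2] at e2
      have hre : c.p M (X t w1) i = c.p M (X t w2) i := by
        refine c.restrict M hMcard (X t w1) (X t w2)
          ⟨hXnn t w1 ht hts hw1n, hact t w1 ht hts⟩ ?_ i hiM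
        intro k hk
        have hkm : k ≠ m := (Finset.mem_erase.mp (hM ▸ hk)).1
        rcases eq_or_ne k i with h' | h'
        · rw [h', hXi, hXi]
        · rcases eq_or_ne k h with h'' | h''
          · rw [h'', hXh, hXh]
          · simp only [hX]
            rw [Function.update_of_ne h', Function.update_of_ne h'',
              Function.update_of_ne hkm, Function.update_of_ne h',
              Function.update_of_ne h'', Function.update_of_ne hkm]
      rw [hre] at e1
      rw [e1, e2]
      ring
  -- C is nowhere zero
  have hApos : ∀ S, 0 < S → ∀ k, 0 ≤ A S k := by
    intro S hS k
    obtain ⟨hk, hhk⟩ := Fintype.exists_ne_of_one_lt_card hcard1 k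
    have hyf := hddf hk S hS
    have h1 := c.P_nonneg hN hyf k
    rw [hrep (dd hk S) hyf k, hdds, hdd_ne hk S k (Ne.symm hhk)] at h1
    linarith
  have hCne : ∀ S, 0 < S → C S ≠ 0 := by
    intro S hS hCS0
    have hC0 : ∀ S1, 0 < S1 → C S1 = 0 := by
      intro S1 hS1
      obtain ⟨m, hmi⟩ := Fintype.exists_ne_of_one_lt_card hcard1 h0
      obtain ⟨h, hh1, hh2⟩ := exists_third hN h0 m
      set s0 : ℝ := min S1 S with hs0def
      have hs0 : 0 < s0 := lt_min hS1 hS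
      obtain ⟨Q, Q', hQ, hQ', heq⟩ := hTriple m h0 h (Ne.symm hmi) hh2 hh1 s0 hs0 S1 S
        (min_le_left _ _) (min_le_right _ _)
      have e0 := heq 0 le_rfl hs0.le
      have e1 := heq s0 hs0.le le_rfl
      simp only [mul_zero, add_zero] at e0
      rw [hCS0] at e1
      have h3 : s0 * (C S1 * Q') = 0 := by linear_combination e1 - e0
      rcases mul_eq_zero.mp h3 with h' | h'
      · exact absurd h' hs0.ne'
      · rcases mul_eq_zero.mp h' with h'' | h''
        · exact h''
        · exact absurd h'' hQ'.ne'
    have htau : ∀ k : N, ∃ j, j ≠ k := fun k => Fintype.exists_ne_of_one_lt_card hcard1 k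
    choose τ hτ using htau
    have hstep : ∀ k, A 1 k < A 2 k := by
      intro k
      have hyf := hddf (τ k) 1 one_pos
      have hy0 : dd (τ k) 1 k = 0 := hdd_ne (τ k) 1 k (Ne.symm (hτ k))
      have hPk : c.P (dd (τ k) 1) k = A 1 k := by
        rw [hrep _ hyf k, hdds, hy0]; ring
      have hlt : c.P (dd (τ k) 1) k < 1 := by
        refine hND _ hyf k (τ k) (hτ k) ?_
        rw [hdd_at]; norm_num
      have hsm' := hsm (dd (τ k) 1) hyf k hlt 1 (by rw [hy0]; norm_num)
      set y' : N → ℝ := Function.update (dd (τ k) 1) k 1 with hy'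
      have hy'nn : ∀ m, 0 ≤ y' m := by
        intro m
        rcases eq_or_ne m k with hmk | hmk
        · rw [hy', hmk, Function.update_self]; norm_num
        · rw [hy', Function.update_of_ne hmk]
          exact hddnn (τ k) 1 (by norm_num) m
      have hy'sum : ∑ m, y' m = 2 := by
        rw [hy', sum_update', hdds, hy0]
        norm_num
      have hy'f : Feasible y' := feas_of_sum_pos hy'nn (by rw [hy'sum]; norm_num)
      have hPk' : c.P y' k = A 2 k := by
        rw [hrep y' hy'f k, hy'sum, hy', Function.update_self, hC0 2 (by norm_num)]
        ring
      rw [hPk] at hsm'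
      rw [hPk'] at hsm'
      exact hsm'
    have h1 := hsumA 1 one_pos
    have h2 := hsumA 2 (by norm_num)
    rw [hC0 1 one_pos] at h1
    rw [hC0 2 (by norm_num)] at h2
    have hlt : ∑ k, A 1 k < ∑ k, A 2 k :=
      Finset.sum_lt_sum_of_nonempty ⟨h0, Finset.mem_univ h0⟩ (fun k _ => hstep k)
    linarith
  -- A S i / C S is constant
  have hABr : ∀ i S S', 0 < S → 0 < S' → A S i * C S' = A S' i * C S := by
    intro i S S' hS hS'
    obtain ⟨m, hmi⟩ := Fintype.exists_ne_of_one_lt_card hcard1 i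
    obtain ⟨h, hh1, hh2⟩ := exists_third hN i m
    set s0 : ℝ := min S S' with hs0def
    have hs0 : 0 < s0 := lt_min hS hS'
    obtain ⟨Q, Q', hQ, hQ', heq⟩ := hTriple m i h (Ne.symm hmi) hh2 hh1 s0 hs0 S S'
      (min_le_left _ _) (min_le_right _ _)
    have e0 := heq 0 le_rfl hs0.le
    have e1 := heq s0 hs0.le le_rfl
    simp only [mul_zero, add_zero] at e0
    have eC : C S * Q' = C S' * Q := by
      have h3 : s0 * (C S * Q') = s0 * (C S' * Q) := by linear_combination e1 - e0
      exact mul_left_cancel₀ hs0.ne' h3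
    have h4 : (A S i * C S') * Q = (A S' i * C S) * Q := by
      linear_combination C S * e0 - A S i * eC
    exact mul_right_cancel₀ hQ.ne' h4
  set b : N → ℝ := fun i => A 1 i / C 1 with hbdef
  have hC1 : C 1 ≠ 0 := hCne 1 one_pos
  have hbC : ∀ S, 0 < S → ∀ i, A S i = b i * C S := by
    intro S hS i
    have h := hABr i S 1 hS one_pos
    rw [hbdef]
    field_simp
    linear_combination h
  set B : ℝ := ∑ j, b j with hBdef
  have hCB : ∀ S, 0 < S → C S * (B + S) = 1 := by
    intro S hS
    have h1 := hsumA S hS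
    have h2 : ∑ k, A S k = B * C S := by
      rw [hBdef, Finset.sum_mul]
      exact Finset.sum_congr rfl (fun k _ => hbC S hS k)
    rw [h2] at h1
    linear_combination h1
  set S1 : ℝ := max 1 (1 - B) with hS1def
  have hS1pos : 0 < S1 := lt_of_lt_of_le one_pos (le_max_left _ _)
  have hBS1 : 0 < B + S1 := by
    have := le_max_right 1 (1 - B)
    rw [hS1def]
    linarith
  have hCS1 : 0 < C S1 := by
    have h := hCB S1 hS1pos
    nlinarith
  have hbnn : ∀ k, 0 ≤ b k := by
    intro k
    have h1 := hApos S1 hS1pos k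
    rw [hbC S1 hS1pos k] at h1
    by_contra hc
    push_neg at hc
    nlinarith
  have hB : 0 ≤ B := Finset.sum_nonneg fun k _ => hbnn k
  have hCpos : ∀ S, 0 < S → 0 < C S := by
    intro S hS
    have h := hCB S hS
    nlinarith
  have hPform : ∀ x, Feasible x → ∀ i, c.P x i = C (∑ j, x j) * (b i + x i) := by
    intro x hx i
    rw [hrep x hx i, hbC _ (feas_sum_pos hx) i]
    ring
  -- conclusion
  refine ⟨b, hbnn, ?_⟩
  intro M hM x hxM i hiM
  set xh : N → ℝ := fun j => if j ∈ M then x j else 0 with hxh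
  have hagree : ∀ j ∈ M, x j = xh j := by
    intro j hj
    rw [hxh]
    simp [hj]
  have hrestr := c.restrict M hM x xh hxM hagree i hiM
  obtain ⟨j0, hj0M, hj0⟩ := hxM.2
  have hxhf : Feasible xh := by
    refine ⟨fun m => ?_, ⟨j0, by rw [hxh]; simpa [hj0M] using hj0⟩⟩
    rw [hxh]
    dsimp only
    split
    · exact hxM.1 m
    · exact le_rfl
  have hShpos : 0 < ∑ j, xh j := feas_sum_pos hxhf
  have hCSh : 0 < C (∑ j, xh j) := hCpos _ hShpos
  have hT : 0 < ∑ j ∈ M, (b j + x j) := by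
    refine Finset.sum_pos' (fun m hm => by have := hbnn m; have := hxM.1 m; linarith) ?_
    refine ⟨j0, hj0M, ?_⟩
    have h1 : 0 < x j0 := lt_of_le_of_ne (hxM.1 j0) (Ne.symm hj0)
    have := hbnn j0
    linarith
  have hsumM : ∑ j ∈ M, c.P xh j = C (∑ j, xh j) * ∑ j ∈ M, (b j + x j) := by
    rw [Finset.mul_sum]
    refine Finset.sum_congr rfl (fun j hj => ?_)
    rw [hPform xh hxhf j]
    congr 1
    congr 1
    rw [hxh]
    simp [hj]
  have hactM : ∃ k ∈ M, xh k ≠ 0 := ⟨j0, hj0M, by rw [hxh]; simpa [hj0M] using hj0⟩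
  have hl := hlca xh hxhf M hM hactM i hiM
  rw [hPform xh hxhf i, hsumM] at hl
  have hxi : xh i = x i := by rw [hxh]; simp [hiM]
  rw [hxi] at hl
  rw [hrestr, eq_div_iff hT.ne']
  apply mul_left_cancel₀ hCSh.ne'
  rw [hl]
  ring

lemma reverse (hN : 3 ≤ Fintype.card N) (b : N → ℝ) (hb : ∀ j, 0 ≤ b j)
    (hp : ∀ M : Finset N, 2 ≤ M.card → ∀ x, FeasibleOn M x → ∀ i ∈ M,
      c.p M x i = (b i + x i) / ∑ j ∈ M, (b j + x j)) :
    c.SM ∧ c.LCA ∧ c.NAR := by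
  have hcard2 := card_univ2 (N := N) hN
  have hterm : ∀ (x : N → ℝ), (∀ i, 0 ≤ x i) → ∀ j, 0 ≤ b j + x j := by
    intro x hx j; have := hb j; have := hx j; linarith
  have hTpos : ∀ x : N → ℝ, Feasible x → 0 < ∑ j, (b j + x j) := by
    intro x hx
    have h1 : 0 < ∑ j, x j := feas_sum_pos hx
    have h2 : ∑ j, x j ≤ ∑ j, (b j + x j) :=
      Finset.sum_le_sum (fun j _ => by have := hb j; linarith)
    linarith
  have hP : ∀ x, Feasible x → ∀ i, c.P x i = (b i + x i) / ∑ j, (b j + x j) :=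
    fun x hx i => hp Finset.univ hcard2 x (feasibleOn_univ.2 hx) i (Finset.mem_univ i)
  refine ⟨?_, ?_, ?_⟩
  · -- SM
    intro x hx i hPi xi' hxi
    have h0i := hx.1 i
    have hx' : Feasible (Function.update x i xi') := by
      refine ⟨fun m => ?_, ⟨i, by rw [Function.update_self]; intro hc; rw [hc] at hxi; linarith⟩⟩
      rcases eq_or_ne m i with hmi | hmi
      · rw [hmi, Function.update_self]; linarith
      · rw [Function.update_of_ne hmi]; exact hx.1 m
    have hT := hTpos x hx
    have hfe : (fun j => b j + Function.update x i xi' j)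
        = Function.update (fun j => b j + x j) i (b i + xi') := by
      funext j
      rcases eq_or_ne j i with hji | hji
      · rw [hji, Function.update_self, Function.update_self]
      · rw [Function.update_of_ne hji, Function.update_of_ne hji]
    have hT' : ∑ j, (b j + Function.update x i xi' j)
        = (∑ j, (b j + x j)) + (xi' - x i) := by
      rw [hfe, sum_update']
      ring
    rw [hP x hx i] at hPi ⊢
    rw [hP _ hx' i, Function.update_self, hT']
    have hlt : b i + x i < ∑ j, (b j + x j) := by
      rw [div_lt_one hT] at hPi
      exact hPi
    rw [div_lt_div_iff₀ hT (by linarith)]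
    have hbi := hterm x hx.1 i
    nlinarith
  · -- LCA
    intro x hx M hM hact i hiM
    have hT := hTpos x hx
    have hTM : 0 < ∑ j ∈ M, (b j + x j) := by
      obtain ⟨j, hjM, hj⟩ := hact
      refine Finset.sum_pos' (fun m _ => hterm x hx.1 m) ⟨j, hjM, ?_⟩
      have := hx.1 j
      have : 0 < x j := lt_of_le_of_ne (hx.1 j) (Ne.symm hj)
      have := hb j
      linarith
    rw [hP x hx i, hp M hM x ⟨hx.1, hact⟩ i hiM]
    have hsumM : ∑ j ∈ M, c.P x j = (∑ j ∈ M, (b j + x j)) / ∑ j, (b j + x j) := by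
      rw [Finset.sum_div]
      exact Finset.sum_congr rfl (fun j _ => hP x hx j)
    rw [hsumM]
    field_simp
  · -- NAR
    intro x hx i j hij xi' xj' h1 h2 h3 k hki hkj
    set x' : N → ℝ := Function.update (Function.update x i xi') j xj' with hx'def
    have hx'nn : ∀ m, 0 ≤ x' m := by
      intro m
      rcases eq_or_ne m j with hmj | hmj
      · rw [hmj, hx'def, Function.update_self]; exact h2
      · rw [hx'def, Function.update_of_ne hmj]
        rcases eq_or_ne m i with hmi | hmi
        · rw [hmi, Function.update_self]; exact h1
        · rw [Function.update_of_ne hmi]; exact hx.1 m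
    have hsum' : ∑ m, x' m = ∑ m, x m := by
      rw [hx'def, sum_update', sum_update', Function.update_of_ne hij.symm]
      linarith
    have hx' : Feasible x' := feas_of_sum_pos hx'nn (by rw [hsum']; exact feas_sum_pos hx)
    have hx'k : x' k = x k := by
      rw [hx'def, Function.update_of_ne hkj, Function.update_of_ne hki]
    rw [hP x hx k, hP x' hx' k, hx'k,
      Finset.sum_add_distrib, Finset.sum_add_distrib, hsum']

end CSF

end Auxiliary

/-- SM, LCA and NAR hold iff the CSF is the linear CSF with head starts
`p_i^M(x) = (b_i + x_i) / ∑_{j∈M} (b_j + x_j)`. -/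
theorem statement4 {N : Type*} [Fintype N] [DecidableEq N]
    (hN : 3 ≤ Fintype.card N) (c : CSF N) :
    (c.SM ∧ c.LCA ∧ c.NAR) ↔
      ∃ b : N → ℝ, (∀ j, 0 ≤ b j) ∧
        ∀ M : Finset N, 2 ≤ M.card → ∀ x, FeasibleOn M x → ∀ i ∈ M,
          c.p M x i = (b i + x i) / ∑ j ∈ M, (b j + x j) := by
  constructor
  · rintro ⟨hsm, hlca, hnar⟩
    exact c.forward hN hsm hlca hnar
  · rintro ⟨b, hb, hp⟩
    exact c.reverse hN b hb hp
end

section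
/- If a contest success function on N satisfies strict monotonicity (SM), Luce's choice axiom (LCA), and homogeneity (HOM), then it satisfies dummy consistency (DC). -/
open Finset

/-- SM, LCA and HOM imply DC. -/
theorem statement7 {N : Type*} [Fintype N] [DecidableEq N]
    (hN : 3 ≤ Fintype.card N) (c : CSF N)
    (hSM : c.SM) (hLCA : c.LCA) (hHOM : c.HOM) :
    c.DC := by
  have hcard : 2 ≤ (Finset.univ : Finset N).card := by
    rw [Finset.card_univ]; omega
  have hfeasOn : ∀ x : N → ℝ, Feasible x → FeasibleOn Finset.univ x := by
    rintro x ⟨h1, i, h2⟩; exact ⟨h1, i, Finset.mem_univ i, h2⟩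
  have hPn : ∀ x, Feasible x → ∀ i : N, 0 ≤ c.P x i := fun x hx i =>
    c.nonneg _ hcard x (hfeasOn x hx) i (Finset.mem_univ i)
  have hPsum : ∀ x, Feasible x → ∑ k, c.P x k = 1 := fun x hx =>
    c.sum_eq_one _ hcard x (hfeasOn x hx)
  -- LCA on pairs
  have pairLCA : ∀ (y : N → ℝ), Feasible y → ∀ k m : N, k ≠ m → (y k ≠ 0 ∨ y m ≠ 0) →
      c.P y k = c.p {k, m} y k * (c.P y k + c.P y m) := by
    intro y hy k m hkm hne
    have h2 : 2 ≤ ({k, m} : Finset N).card := by rw [Finset.card_pair hkm]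
    have hex : ∃ t ∈ ({k, m} : Finset N), y t ≠ 0 := by
      rcases hne with h | h
      · exact ⟨k, by simp, h⟩
      · exact ⟨m, by simp, h⟩
    have := hLCA y hy {k, m} h2 hex k (by simp)
    rwa [Finset.sum_pair hkm] at this
  -- restrict on pairs
  have pairRestrict : ∀ (y y' : N → ℝ) (k m : N), k ≠ m → (∀ t, 0 ≤ y t) →
      (y k ≠ 0 ∨ y m ≠ 0) → y k = y' k → y m = y' m →
      c.p {k, m} y k = c.p {k, m} y' k := by
    intro y y' k m hkm hnn hne hk hm
    have h2 : 2 ≤ ({k, m} : Finset N).card := by rw [Finset.card_pair hkm]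
    refine c.restrict {k, m} h2 y y' ⟨hnn, ?_⟩ ?_ k (by simp)
    · rcases hne with h | h
      · exact ⟨k, by simp, h⟩
      · exact ⟨m, by simp, h⟩
    · intro t ht
      rcases Finset.mem_insert.mp ht with h | h
      · subst h; exact hk
      · rw [Finset.mem_singleton.mp h]; exact hm
  -- key lemma: zero effort implies zero winning probability
  have key : ∀ x, Feasible x → ∀ i : N, x i = 0 → c.P x i = 0 := by
    intro x hx i hxi
    by_contra ha0
    have ha : 0 < c.P x i := lt_of_le_of_ne (hPn x hx i) (Ne.symm ha0)
    obtain ⟨j, hj⟩ := hx.2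
    have hji : j ≠ i := fun h => hj (h ▸ hxi)
    have hij : i ≠ j := hji.symm
    have hxj : 0 < x j := lt_of_le_of_ne (hx.1 j) (Ne.symm hj)
    set a := c.P x i with hadef
    set b := c.P x j with hbdef
    have hab1 : a + b ≤ 1 := by
      have h1 : ∑ k ∈ ({i, j} : Finset N), c.P x k ≤ ∑ k, c.P x k := by
        apply Finset.sum_le_sum_of_subset_of_nonneg (Finset.subset_univ _)
        intro t _ _; exact hPn x hx t
      rw [Finset.sum_pair hij, hPsum x hx] at h1
      exact h1
    have hb1 : b < 1 := by linarith
    -- strict monotonicity gives a raise for j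
    set z := Function.update x j (x j + 1) with hzdef
    have hB : b < c.P z j := hSM x hx j hb1 (x j + 1) (by linarith)
    set B := c.P z j with hBdef
    have hzj : z j = x j + 1 := Function.update_self j _ x
    have hzk : ∀ k, k ≠ j → z k = x k := fun k h => Function.update_of_ne h _ x
    have hznn : ∀ k, 0 ≤ z k := by
      intro k
      by_cases h : k = j
      · subst h; rw [hzj]; linarith
      · rw [hzk k h]; exact hx.1 k
    have hzfeas : Feasible z := ⟨hznn, j, by rw [hzj]; linarith⟩
    -- the scaled vector w = l • x agrees with z on coordinates that are 0 and on j
    set l := (x j + 1) / x j with hldef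
    have hl : 0 < l := div_pos (by linarith) hxj
    set w := fun k => l * x k with hwdef
    have hwnn : ∀ t, 0 ≤ w t := fun t => mul_nonneg hl.le (hx.1 t)
    have hwj : w j = x j + 1 := by
      show l * x j = x j + 1
      rw [hldef]; field_simp
    have hwjne : w j ≠ 0 := by rw [hwj]; linarith
    have hwfeas : Feasible w := ⟨hwnn, j, hwjne⟩
    have hwx : ∀ k, c.P w k = c.P x k := fun k => hHOM x hx k l hl
    -- case b = 0 : immediate contradiction via pair {i, j}
    rcases (hPn x hx j).eq_or_lt with hb0 | hbpos
    · -- b = 0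
      have eq1 := pairLCA w hwfeas i j hij (Or.inr hwjne)
      have hb0' : b = 0 := hbdef.trans hb0.symm
      rw [hwx i, hwx j, ← hadef, ← hbdef, hb0', add_zero] at eq1
      have hH : c.p {i, j} w i = 1 := by
        have h : c.p {i, j} w i * a = 1 * a := by linarith [eq1]
        exact mul_right_cancel₀ ha0 h
      have hrw : c.p {i, j} z i = c.p {i, j} w i := by
        refine (pairRestrict w z i j hij hwnn (Or.inr hwjne) ?_ ?_).symm
        · show l * x i = z i
          rw [hxi, mul_zero, hzk i hij, hxi]
        · rw [hwj, hzj]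
      have eq2 := pairLCA z hzfeas i j hij (Or.inr (by rw [hzj]; intro h; linarith))
      rw [hrw, hH, one_mul] at eq2
      have hB0 : B = 0 := by linarith [eq2]
      rw [hB0] at hB
      linarith
    · -- case b > 0 : show b * P z k = P x k * B for every k, then sum up
      have branch2 : ∀ k, k ≠ j → x k = 0 → b * c.P z k = c.P x k * B := by
        intro k hkj hxk
        have eq1 := pairLCA w hwfeas k j hkj (Or.inr hwjne)
        rw [hwx k, hwx j, ← hbdef] at eq1
        have hrw : c.p {k, j} z k = c.p {k, j} w k := by
          refine (pairRestrict w z k j hkj hwnn (Or.inr hwjne) ?_ ?_).symm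
          · show l * x k = z k
            rw [hxk, mul_zero, hzk k hkj, hxk]
          · rw [hwj, hzj]
        have eq2 := pairLCA z hzfeas k j hkj (Or.inr (by rw [hzj]; intro h; linarith))
        rw [hrw] at eq2
        -- eliminate the common p-value
        have hden : c.P x k + b > 0 := by
          have := hPn x hx k; linarith
        have hH : c.p {k, j} w k = c.P x k / (c.P x k + b) := by
          rw [eq_div_iff (ne_of_gt hden)]
          linarith [eq1]
        rw [hH] at eq2
        have h3 : c.P z k * (c.P x k + b) = c.P x k * (c.P z k + B) := by
          field_simp at eq2
          linarith [eq2]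
        linear_combination h3
      have hzi := branch2 i hij hxi
      have claim : ∀ k, b * c.P z k = c.P x k * B := by
        intro k
        by_cases hkj : k = j
        · subst hkj; ring
        by_cases hxk : x k = 0
        · exact branch2 k hkj hxk
        -- x k ≠ 0 : use pair {k, i}
        have hki : k ≠ i := fun h => hxk (h ▸ hxi)
        have eq1 := pairLCA x hx k i hki (Or.inl hxk)
        have hrw : c.p {k, i} z k = c.p {k, i} x k := by
          refine (pairRestrict x z k i hki hx.1 (Or.inl hxk) ?_ ?_).symm
          · exact (hzk k hkj).symm
          · exact (hzk i hij).symm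
        have eq2 := pairLCA z hzfeas k i hki (Or.inl (by rw [hzk k hkj]; exact hxk))
        rw [hrw] at eq2
        set H := c.p {k, i} x k with hHdef
        -- from eq1, eq2 : a * P z k = P x k * P z i
        have h4 : a * c.P z k = c.P x k * c.P z i := by
          have hden : c.P x k + a > 0 := by
            have := hPn x hx k; linarith
          have hH : H = c.P x k / (c.P x k + a) := by
            rw [eq_div_iff (ne_of_gt hden)]
            linarith [eq1]
          rw [hH] at eq2
          field_simp at eq2
          linarith [eq2]
        have h5 : a * (b * c.P z k) = a * (c.P x k * B) := by
          linear_combination b * h4 + c.P x k * hzi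
        exact mul_left_cancel₀ (ne_of_gt ha) h5
      -- sum the claim over all players
      have hsum : b * ∑ k, c.P z k = (∑ k, c.P x k) * B := by
        rw [Finset.mul_sum, Finset.sum_mul]
        exact Finset.sum_congr rfl fun k _ => claim k
      rw [hPsum z hzfeas, hPsum x hx, mul_one, one_mul] at hsum
      linarith
  -- now derive DC
  intro x hx i hxi j hji
  have hPi : c.P x i = 0 := key x hx i hxi
  set M := Finset.univ.erase i with hMdef
  have hMcard : 2 ≤ M.card := by
    have : M.card = Fintype.card N - 1 := by
      rw [hMdef, Finset.card_erase_of_mem (Finset.mem_univ i), Finset.card_univ]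
    omega
  have hex : ∃ k ∈ M, x k ≠ 0 := by
    obtain ⟨k, hk⟩ := hx.2
    exact ⟨k, Finset.mem_erase.mpr ⟨fun h => hk (h ▸ hxi), Finset.mem_univ k⟩, hk⟩
  have hLj := hLCA x hx M hMcard hex j (Finset.mem_erase.mpr ⟨hji, Finset.mem_univ j⟩)
  have hs : ∑ k ∈ M, c.P x k = 1 := by
    rw [hMdef, Finset.sum_erase_eq_sub (Finset.mem_univ i), hPsum x hx, hPi, sub_zero]
  rw [hLj, hs, mul_one]
end

section
/- Let f : ℝ_+ → ℝ_+ be strictly increasing and nonnegative, and let the contest success function on N be the symmetric logit CSF p_i^M(x^M) = f(x_i) / Σ_{j∈M} f(x_j) for every M ⊆ N with |M| ≥ 2, i ∈ M, and x^M ∈ ℝ_+^M \ {0}. Then this CSF satisfies split-proofness (SP) if and only if f is superadditive, i.e., f(s + t) ≥ f(s) + f(t) for all s, t ≥ 0. -/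
open Finset

private lemma statement9_key_of (a b C : ℝ) (hC : 0 < C) (ha : 0 ≤ a) (hb : 0 ≤ b)
    (h : a / (a + C) ≤ b / (b + C)) : a ≤ b := by
  rw [div_le_div_iff₀ (by linarith) (by linarith)] at h
  nlinarith

private lemma statement9_key_to (a b R : ℝ) (hR : 0 ≤ R) (hab : a ≤ b) (hS : 0 < a + R) :
    a / (a + R) ≤ b / (b + R) := by
  rw [div_le_div_iff₀ hS (by linarith)]
  nlinarith

/-- the symmetric logit CSF with impact function `f` satisfies
split-proofness iff `f` is superadditive on ℝ₊. -/
theorem statement9 {N : Type*} [Fintype N] [DecidableEq N]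
    (hN : 3 ≤ Fintype.card N) (c : CSF N) (f : ℝ → ℝ)
    (hmono : StrictMonoOn f (Set.Ici 0)) (hnn : ∀ t : ℝ, 0 ≤ t → 0 ≤ f t)
    (hform : ∀ M : Finset N, 2 ≤ M.card → ∀ x, FeasibleOn M x → ∀ i ∈ M,
      c.p M x i = f (x i) / ∑ j ∈ M, f (x j)) :
    c.SP ↔ ∀ s t : ℝ, 0 ≤ s → 0 ≤ t → f s + f t ≤ f (s + t) := by
  have hcard : 2 ≤ (Finset.univ : Finset N).card := by
    rw [Finset.card_univ]; omega
  have hf0 : 0 ≤ f 0 := hnn 0 le_rfl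
  constructor
  · -- SP → superadditive
    intro hSP s t hs ht
    obtain ⟨i⟩ : Nonempty N := Fintype.card_pos_iff.mp (by omega)
    obtain ⟨j, hji⟩ := Fintype.exists_ne_of_one_lt_card (by omega) i
    obtain ⟨k, hki, hkj⟩ : ∃ k : N, k ≠ i ∧ k ≠ j := by
      by_contra h
      push_neg at h
      have hsub : (Finset.univ : Finset N) ⊆ {i, j} := by
        intro m _
        by_cases hmi : m = i
        · simp [hmi]
        · simp [h m hmi]
      have h1 := Finset.card_le_card hsub
      have h2 : ({i, j} : Finset N).card ≤ 2 :=
        (Finset.card_insert_le _ _).trans (by simp)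
      rw [Finset.card_univ] at h1
      omega
    have hij : i ≠ j := hji.symm
    set x : N → ℝ := fun m => if m = i then s else if m = j then t else if m = k then 1 else 0
      with hxdef
    have hxnn : ∀ m, 0 ≤ x m := by
      intro m; simp only [hxdef]; split_ifs <;> norm_num [hs, ht]
    have hxi : x i = s := by simp [hxdef]
    have hxj : x j = t := by simp [hxdef, hji]
    have hxk : x k = 1 := by simp [hxdef, hki, hkj]
    have hxfeas : Feasible x := ⟨hxnn, ⟨k, by rw [hxk]; norm_num⟩⟩
    have hfeasU : FeasibleOn Finset.univ x :=
      ⟨hxnn, ⟨k, Finset.mem_univ k, by rw [hxk]; norm_num⟩⟩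
    have hPi : c.P x i = f s / ∑ m, f (x m) := by
      rw [CSF.P, hform _ hcard _ hfeasU i (Finset.mem_univ i), hxi]
    have hPj : c.P x j = f t / ∑ m, f (x m) := by
      rw [CSF.P, hform _ hcard _ hfeasU j (Finset.mem_univ j), hxj]
    have hM : i ∈ Finset.univ.erase j := Finset.mem_erase.mpr ⟨hij, Finset.mem_univ i⟩
    have hMcard : 2 ≤ (Finset.univ.erase j).card := by
      rw [Finset.card_erase_of_mem (Finset.mem_univ j), Finset.card_univ]; omega
    have hkM : k ∈ Finset.univ.erase j := Finset.mem_erase.mpr ⟨hkj, Finset.mem_univ k⟩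
    have hx'i : Function.update x i (x i + x j) i = s + t := by
      rw [Function.update_self, hxi, hxj]
    have hx'ne : ∀ m, m ≠ i → Function.update x i (x i + x j) m = x m :=
      fun m hm => Function.update_of_ne hm _ _
    have hfeasM : FeasibleOn (Finset.univ.erase j) (Function.update x i (x i + x j)) := by
      refine ⟨fun m => ?_, ⟨k, hkM, ?_⟩⟩
      · by_cases hm : m = i
        · rw [hm, Function.update_self]
          have := hxnn i; have := hxnn j; linarith
        · rw [hx'ne m hm]; exact hxnn m
      · rw [hx'ne k hki, hxk]; norm_num
    have hPerase : c.p (Finset.univ.erase j) (Function.update x i (x i + x j)) i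
        = f (s + t) / ∑ m ∈ Finset.univ.erase j, f (Function.update x i (x i + x j) m) := by
      rw [hform _ hMcard _ hfeasM i hM, hx'i]
    set C : ℝ := ∑ m ∈ (Finset.univ.erase j).erase i, f (x m) with hCdef
    have hS : ∑ m, f (x m) = f s + f t + C := by
      rw [← Finset.add_sum_erase _ _ (Finset.mem_univ j), ← Finset.add_sum_erase _ _ hM,
        hxi, hxj]
      ring
    have hS' : ∑ m ∈ Finset.univ.erase j, f (Function.update x i (x i + x j) m)
        = f (s + t) + C := by
      rw [← Finset.add_sum_erase _ _ hM, hx'i]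
      congr 1
      exact Finset.sum_congr rfl fun m hm => by rw [hx'ne m (Finset.ne_of_mem_erase hm)]
    have hf1 : 0 < f 1 :=
      lt_of_le_of_lt hf0 (hmono (Set.mem_Ici.mpr le_rfl) (Set.mem_Ici.mpr zero_le_one) one_pos)
    have hCpos : 0 < C := by
      have hkT : k ∈ (Finset.univ.erase j).erase i := Finset.mem_erase.mpr ⟨hki, hkM⟩
      have h1 : f (x k) ≤ C := Finset.single_le_sum (fun m _ => hnn _ (hxnn m)) hkT
      rw [hxk] at h1
      linarith
    have h := hSP x hxfeas i j hij
    rw [hPi, hPj, hPerase, hS, hS', ← add_div] at h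
    exact statement9_key_of _ _ _ hCpos (add_nonneg (hnn s hs) (hnn t ht))
      (hnn _ (by linarith)) h
  · -- superadditive → SP
    intro hsuper x hx i j hij
    have hxnn := hx.1
    obtain ⟨m0, hm0⟩ := hx.2
    have hm0pos : 0 < x m0 := lt_of_le_of_ne (hxnn m0) (Ne.symm hm0)
    have hfeasU : FeasibleOn Finset.univ x := ⟨hxnn, m0, Finset.mem_univ _, hm0⟩
    have hM : i ∈ Finset.univ.erase j := Finset.mem_erase.mpr ⟨hij, Finset.mem_univ i⟩
    have hMcard : 2 ≤ (Finset.univ.erase j).card := by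
      rw [Finset.card_erase_of_mem (Finset.mem_univ j), Finset.card_univ]; omega
    have hx'ne : ∀ m, m ≠ i → Function.update x i (x i + x j) m = x m :=
      fun m hm => Function.update_of_ne hm _ _
    have hx'nn : ∀ m, 0 ≤ Function.update x i (x i + x j) m := by
      intro m
      by_cases hm : m = i
      · rw [hm, Function.update_self]
        have := hxnn i; have := hxnn j; linarith
      · rw [hx'ne m hm]; exact hxnn m
    have hfeasM : FeasibleOn (Finset.univ.erase j) (Function.update x i (x i + x j)) := by
      refine ⟨hx'nn, ?_⟩
      by_cases h1 : m0 = i ∨ m0 = j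
      · refine ⟨i, hM, ?_⟩
        rw [Function.update_self]
        have hi := hxnn i; have hj := hxnn j
        rcases h1 with h1 | h1 <;> subst h1
        · exact ne_of_gt (by linarith)
        · exact ne_of_gt (by linarith)
      · push_neg at h1
        exact ⟨m0, Finset.mem_erase.mpr ⟨h1.2, Finset.mem_univ _⟩,
          by rw [hx'ne m0 h1.1]; exact hm0⟩
    set C : ℝ := ∑ m ∈ (Finset.univ.erase j).erase i, f (x m) with hCdef
    have hS : ∑ m, f (x m) = f (x i) + f (x j) + C := by
      rw [← Finset.add_sum_erase _ _ (Finset.mem_univ j), ← Finset.add_sum_erase _ _ hM]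
      ring
    have hS' : ∑ m ∈ Finset.univ.erase j, f (Function.update x i (x i + x j) m)
        = f (x i + x j) + C := by
      rw [← Finset.add_sum_erase _ _ hM, Function.update_self]
      congr 1
      exact Finset.sum_congr rfl fun m hm => by rw [hx'ne m (Finset.ne_of_mem_erase hm)]
    have hCnn : 0 ≤ C :=
      Finset.sum_nonneg fun m _ => hnn _ (hxnn m)
    have hSpos : 0 < ∑ m, f (x m) := by
      have h1 : f (x m0) ≤ ∑ m, f (x m) :=
        Finset.single_le_sum (fun m _ => hnn _ (hxnn m)) (Finset.mem_univ m0)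
      have h2 : f 0 < f (x m0) :=
        hmono (Set.mem_Ici.mpr le_rfl) (Set.mem_Ici.mpr (hxnn m0)) hm0pos
      linarith
    rw [CSF.P, CSF.P, hform _ hcard _ hfeasU i (Finset.mem_univ i),
      hform _ hcard _ hfeasU j (Finset.mem_univ j),
      hform _ hMcard _ hfeasM i hM, Function.update_self, hS', ← add_div, hS]
    rw [hS] at hSpos
    exact statement9_key_to _ _ _ hCnn
      (hsuper (x i) (x j) (hxnn i) (hxnn j)) hSpos
end
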